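/- arXiv:1402.0674 — 10 statements merged into one kernel-verified Lean document; each statement's English description precedes it below -/
import Mathlib

section
/- Let (X,d) be a compact metric space and f : X → X a homeomorphism. If f has the two-sided limit shadowing property with a gap, then both f and f⁻¹ have the limit shadowing property. -/
open Filter Topology

variable {X : Type*} [MetricSpace X]

/-- A two-sided limit pseudo-orbit: `d(f(x i), x (i+1)) → 0` as `|i| → ∞`. -/
def IsTwoSidedLimitPseudoOrbit (f : X ≃ X) (x : ℤ → X) : Prop :=
  Tendsto (fun i : ℤ => dist (f (x i)) (x (i + 1))) cofinite (𝓝 0)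

/-- The sequence `x` is two-sided limit shadowed with gap `K`. -/
def TwoSidedLimitShadowedWithGap (f : X ≃ X) (x : ℤ → X) (K : ℤ) : Prop :=
  ∃ y : X,
    Tendsto (fun i : ℤ => dist ((f ^ i) y) (x i)) atBot (𝓝 0) ∧
    Tendsto (fun i : ℤ => dist ((f ^ (K + i)) y) (x i)) atTop (𝓝 0)

/-- `f` has the two-sided limit shadowing property with a gap. -/
def TwoSidedLimitShadowingWithGap (f : X ≃ X) : Prop :=
  ∃ N : ℕ, ∀ x : ℤ → X, IsTwoSidedLimitPseudoOrbit f x →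
    ∃ K : ℤ, |K| ≤ (N : ℤ) ∧ TwoSidedLimitShadowedWithGap f x K

/-- The limit shadowing property for a map `g`. -/
def LimitShadowing (g : X → X) : Prop :=
  ∀ x : ℕ → X,
    Tendsto (fun i : ℕ => dist (g (x i)) (x (i + 1))) atTop (𝓝 0) →
    ∃ y : X, Tendsto (fun i : ℕ => dist (g^[i] y) (x i)) atTop (𝓝 0)

lemma aux_zpow_natCast_apply (e : X ≃ X) (n : ℕ) (y : X) : (e ^ (n : ℤ)) y = e^[n] y := by
  rw [zpow_natCast]
  induction n with
  | zero => rfl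
  | succ k ih =>
    rw [Function.iterate_succ_apply', pow_succ', Equiv.Perm.mul_apply, ih]

lemma aux_zpow_neg_natCast_apply (e : X ≃ X) (n : ℕ) (y : X) :
    (e ^ (-(n : ℤ))) y = e.symm^[n] y := by
  have : e ^ (-(n : ℤ)) = (e⁻¹) ^ (n : ℤ) := by
    rw [zpow_neg, ← inv_zpow]
  rw [this, aux_zpow_natCast_apply]
  rfl

lemma aux_unif [CompactSpace X] (g : X → X) (hg : Continuous g) {a b : ℕ → X}
    (h : Tendsto (fun n => dist (a n) (b n)) atTop (𝓝 0)) :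
    Tendsto (fun n => dist (g (a n)) (g (b n))) atTop (𝓝 0) := by
  have hu : UniformContinuous g := CompactSpace.uniformContinuous_of_continuous hg
  rw [← tendsto_uniformity_iff_dist_tendsto_zero
    (f := fun n => (a n, b n))] at h
  exact tendsto_uniformity_iff_dist_tendsto_zero.1 (Filter.Tendsto.comp hu h)

lemma aux_toNat_atTop : Tendsto Int.toNat atTop atTop :=
  tendsto_atTop_atTop.2 fun b => ⟨(b : ℤ), fun a ha => by omega⟩

/-- If a homeomorphism of a compact metric space has the two-sided limit shadowing
property with a gap, then both `f` and `f⁻¹` have the limit shadowing property. -/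
theorem stmt0 [CompactSpace X] (f : X ≃ₜ X)
    (h : TwoSidedLimitShadowingWithGap f.toEquiv) :
    LimitShadowing ⇑f ∧ LimitShadowing ⇑f.symm := by
  obtain ⟨N, hN⟩ := h
  set e := f.toEquiv with he
  constructor
  · -- limit shadowing for f
    intro x hx
    set z : ℤ → X := fun i => if i < 0 then (e ^ i) (x 0) else x i.toNat with hz
    have hpo : IsTwoSidedLimitPseudoOrbit e z := by
      unfold IsTwoSidedLimitPseudoOrbit
      rw [Int.cofinite_eq, tendsto_sup]
      constructor
      · -- atBot: eventually 0
        apply Tendsto.congr' _ tendsto_const_nhds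
        filter_upwards [eventually_le_atBot (-1 : ℤ)] with i hi
        have h1 : z i = (e ^ i) (x 0) := by simp only [hz]; rw [if_pos (by omega)]
        have h2 : z (i + 1) = (e ^ (i + 1)) (x 0) := by
          simp only [hz]
          by_cases hc : i + 1 < 0
          · rw [if_pos hc]
          · have : i + 1 = 0 := by omega
            rw [if_neg hc, this]
            simp
        have h3 : e ((e ^ i) (x 0)) = (e ^ (i + 1)) (x 0) := by
          rw [add_comm, zpow_add, zpow_one, Equiv.Perm.mul_apply]
        rw [h1, h2, ← h3, dist_self]
      · -- atTop
        apply Tendsto.congr'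
          (f₁ := fun i : ℤ => dist (f (x i.toNat)) (x (i.toNat + 1)))
        · filter_upwards [eventually_ge_atTop (0 : ℤ)] with i hi
          have h1 : z i = x i.toNat := by simp only [hz]; rw [if_neg (by omega)]
          have h2 : z (i + 1) = x (i.toNat + 1) := by
            simp only [hz]
            rw [if_neg (by omega)]
            congr 1
            omega
          rw [h1, h2]
          rfl
        · exact hx.comp aux_toNat_atTop
    obtain ⟨K, -, y, -, hTop⟩ := hN z hpo
    refine ⟨(e ^ K) y, ?_⟩
    have key : Tendsto (fun n : ℕ => dist ((e ^ (K + (n : ℤ))) y) (z (n : ℤ))) atTop (𝓝 0) :=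
      hTop.comp tendsto_natCast_atTop_atTop
    apply key.congr
    intro n
    have h1 : z (n : ℤ) = x n := by
      have hn : ((n : ℤ)).toNat = n := by omega
      simp only [hz]
      rw [if_neg (by omega), hn]
    have h2 : (e ^ (K + (n : ℤ))) y = (⇑f)^[n] ((e ^ K) y) := by
      rw [add_comm, zpow_add, Equiv.Perm.mul_apply, aux_zpow_natCast_apply]
      rfl
    rw [h1, h2]
  · -- limit shadowing for f.symm
    intro x hx
    -- dist (f (x (m+1))) (x m) → 0
    have hx' : Tendsto (fun m : ℕ => dist (f (x (m + 1))) (x m)) atTop (𝓝 0) := by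
      have h0 : Tendsto (fun m : ℕ => dist (x (m + 1)) (f.symm (x m))) atTop (𝓝 0) := by
        simpa [dist_comm] using hx
      have := aux_unif (⇑f) f.continuous h0
      simpa using this
    set z : ℤ → X := fun i => if 0 < i then (e ^ i) (x 0) else x (-i).toNat with hz
    have hpo : IsTwoSidedLimitPseudoOrbit e z := by
      unfold IsTwoSidedLimitPseudoOrbit
      rw [Int.cofinite_eq, tendsto_sup]
      constructor
      · -- atBot
        apply Tendsto.congr'
          (f₁ := fun i : ℤ => dist (f (x ((-(i + 1)).toNat + 1))) (x (-(i + 1)).toNat))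
        · filter_upwards [eventually_le_atBot (-1 : ℤ)] with i hi
          have h1 : z i = x (-i).toNat := by simp only [hz]; rw [if_neg (by omega)]
          have h2 : z (i + 1) = x (-(i + 1)).toNat := by
            simp only [hz]; rw [if_neg (by omega)]
          have h3 : (-i).toNat = (-(i + 1)).toNat + 1 := by omega
          rw [h1, h2, h3]
          rfl
        · exact hx'.comp (aux_toNat_atTop.comp
            (tendsto_neg_atBot_atTop.comp (tendsto_atBot_add_const_right _ 1 tendsto_id)))
      · -- atTop: eventually 0
        apply Tendsto.congr' _ tendsto_const_nhds
        filter_upwards [eventually_ge_atTop (0 : ℤ)] with i hi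
        have h1 : z i = (e ^ i) (x 0) := by
          simp only [hz]
          by_cases hc : 0 < i
          · rw [if_pos hc]
          · have : i = 0 := by omega
            rw [if_neg hc, this]
            simp
        have h2 : z (i + 1) = (e ^ (i + 1)) (x 0) := by
          simp only [hz]; rw [if_pos (by omega)]
        have h3 : e ((e ^ i) (x 0)) = (e ^ (i + 1)) (x 0) := by
          rw [add_comm, zpow_add, zpow_one, Equiv.Perm.mul_apply]
        rw [h1, h2, ← h3, dist_self]
    obtain ⟨K, -, y, hBot, -⟩ := hN z hpo
    refine ⟨y, ?_⟩
    have key : Tendsto (fun n : ℕ => dist ((e ^ (-(n : ℤ))) y) (z (-(n : ℤ)))) atTop (𝓝 0) :=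
      hBot.comp (tendsto_neg_atTop_atBot.comp tendsto_natCast_atTop_atTop)
    apply key.congr
    intro n
    have h1 : z (-(n : ℤ)) = x n := by
      have hn : (-(-(n : ℤ))).toNat = n := by omega
      simp only [hz]
      rw [if_neg (by omega), hn]
    have h2 : (e ^ (-(n : ℤ))) y = (⇑f.symm)^[n] y := by
      rw [aux_zpow_neg_natCast_apply]
      rfl
    rw [h1, h2]
end

section
/- Let (X,d) be a compact metric space and f : X → X a homeomorphism with the two-sided limit shadowing property with gap N ∈ ℕ. Then for every x, y ∈ X there exists an integer K with |K| ≤ N such that W^s(f^{−K}(x)) ∩ W^u(y) ≠ ∅. -/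
open Filter Topology

variable {X : Type*} [MetricSpace X]

/-- `f` has the two-sided limit shadowing property with gap `N`. -/
def TwoSidedLimitShadowingGapN (f : X ≃ X) (N : ℕ) : Prop :=
  ∀ x : ℤ → X, IsTwoSidedLimitPseudoOrbit f x →
    ∃ K : ℤ, |K| ≤ (N : ℤ) ∧ TwoSidedLimitShadowedWithGap f x K

/-- The stable set of `x`. -/
def stableSet (f : X ≃ₜ X) (x : X) : Set X :=
  {y | Tendsto (fun n : ℕ => dist ((⇑f)^[n] y) ((⇑f)^[n] x)) atTop (𝓝 0)}

/-- The unstable set of `x`. -/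
def unstableSet (f : X ≃ₜ X) (x : X) : Set X :=
  {y | Tendsto (fun n : ℕ => dist ((⇑f.symm)^[n] y) ((⇑f.symm)^[n] x)) atTop (𝓝 0)}

lemma iter_eq_zpow (f : X ≃ₜ X) (n : ℕ) (a : X) :
    (⇑f)^[n] a = (f.toEquiv ^ (n : ℤ)) a := by
  rw [zpow_natCast, Equiv.Perm.coe_pow]
  rfl

lemma iter_symm_eq_zpow (f : X ≃ₜ X) (n : ℕ) (a : X) :
    (⇑f.symm)^[n] a = (f.toEquiv ^ (-(n : ℤ))) a := by
  rw [zpow_neg, zpow_natCast, ← inv_pow, Equiv.Perm.coe_pow]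
  rfl

lemma zpow_apply_zpow (f : X ≃ₜ X) (m k : ℤ) (a : X) :
    (f.toEquiv ^ m) ((f.toEquiv ^ k) a) = (f.toEquiv ^ (m + k)) a := by
  rw [zpow_add]
  rfl

/-- If a homeomorphism of a compact metric space has the two-sided limit shadowing
property with gap `N`, then for all `x, y` there is `K` with `|K| ≤ N` such that
`W^s(f^{-K}(x)) ∩ W^u(y) ≠ ∅`. -/
theorem stmt1 [CompactSpace X] (f : X ≃ₜ X) (N : ℕ)
    (h : TwoSidedLimitShadowingGapN f.toEquiv N) (x y : X) :
    ∃ K : ℤ, |K| ≤ (N : ℤ) ∧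
      (stableSet f ((f.toEquiv ^ (-K)) x) ∩ unstableSet f y).Nonempty := by
  set seq : ℤ → X := fun i => if i < 0 then (f.toEquiv ^ i) y else (f.toEquiv ^ i) x with hseq
  have hpo : IsTwoSidedLimitPseudoOrbit f.toEquiv seq := by
    have hev : ∀ᶠ i in (cofinite : Filter ℤ),
        dist (f.toEquiv (seq i)) (seq (i + 1)) = 0 := by
      have hfin : ({-1} : Set ℤ).Finite := Set.finite_singleton _
      filter_upwards [hfin.compl_mem_cofinite] with i hi
      simp only [Set.mem_compl_iff, Set.mem_singleton_iff] at hi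
      have key : ∀ a : X, f.toEquiv ((f.toEquiv ^ i) a) = (f.toEquiv ^ (i + 1)) a := by
        intro a
        have := zpow_apply_zpow f 1 i a
        simpa [add_comm] using this
      rcases lt_or_ge i (-1) with hlt | hge
      · have h1 : i < 0 := by omega
        have h2 : i + 1 < 0 := by omega
        simp [hseq, h1, h2, key y]
      · have h1 : ¬ i < 0 := by omega
        have h2 : ¬ i + 1 < 0 := by omega
        simp [hseq, h1, h2, key x]
    exact tendsto_const_nhds.congr' (by filter_upwards [hev] with i hi; exact hi.symm)
  obtain ⟨K, hK, z, hneg, hpos⟩ := h seq hpo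
  refine ⟨K, hK, z, ?_, ?_⟩
  · -- stable set
    have hmap : Tendsto (fun n : ℕ => (n : ℤ) - K) atTop atTop := by
      simpa [sub_eq_add_neg] using
        tendsto_atTop_add_const_right atTop (-K) tendsto_natCast_atTop_atTop
    have h1 := hpos.comp hmap
    have hKn : ∀ᶠ n : ℕ in atTop, K ≤ (n : ℤ) :=
      tendsto_natCast_atTop_atTop.eventually_ge_atTop K
    refine h1.congr' ?_
    filter_upwards [hKn] with n hn
    have hge : ¬ ((n : ℤ) - K < 0) := by omega
    have e1 : K + ((n : ℤ) - K) = (n : ℤ) := by ring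
    simp only [Function.comp, hseq, hge, if_false, e1, iter_eq_zpow,
      zpow_apply_zpow]
    rw [sub_eq_add_neg]
  · -- unstable set
    have hmap : Tendsto (fun n : ℕ => -(n : ℤ)) atTop atBot :=
      tendsto_neg_atTop_atBot.comp tendsto_natCast_atTop_atTop
    have h1 := hneg.comp hmap
    refine h1.congr' ?_
    filter_upwards [eventually_ge_atTop 1] with n hn
    have hlt : -(n : ℤ) < 0 := by omega
    simp only [Function.comp, hseq, hlt, if_true, iter_symm_eq_zpow]
end

section
/- Let (X,d) be a compact metric space and f : X → X a homeomorphism with the two-sided limit shadowing property with gap N for some N ∈ ℕ. Then f is chain-transitive. -/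
open Filter Topology

variable {X : Type*} [MetricSpace X]

/-- `g` is chain-transitive: for every `δ > 0` and `x, y` there is a finite
`δ`-pseudo-orbit from `x` to `y`. -/
def ChainTransitive (g : X → X) : Prop :=
  ∀ δ : ℝ, 0 < δ → ∀ x y : X, ∃ n : ℕ, 0 < n ∧ ∃ z : ℕ → X,
    z 0 = x ∧ z n = y ∧ ∀ i < n, dist (g (z i)) (z (i + 1)) < δ

/-!
Let `p` be an ω-limit point of `x` and `q` an α-limit point of `y`. Following the orbit of `p`
up to time `0` and then the orbit of `q` is a two-sided limit pseudo-orbit with a single jump, so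
some `w` has backward orbit asymptotic to the orbit of `p` and, after a time shift, forward
orbit asymptotic to the orbit of `q`. The orbit of `x` returns arbitrarily close to every point
of the orbit of `p`, and the backward orbit of `y` to every point of the orbit of `q`; hence a
`δ`-chain runs along the orbit of `x`, jumps onto the far past of `w`, follows `w` into its far
future and jumps onto the backward orbit of `y`, which it follows up to `y`.
-/

open Relation

namespace Homeomorph

variable {Y : Type*} [TopologicalSpace Y]

def toPermHom : (Y ≃ₜ Y) →* Equiv.Perm Y where
  toFun := Homeomorph.toEquiv
  map_one' := rfl
  map_mul' _ _ := rfl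

theorem coe_toEquiv_zpow (f : Y ≃ₜ Y) (i : ℤ) : ⇑(f.toEquiv ^ i) = ⇑(f ^ i) := by
  rw [show f.toEquiv ^ i = toPermHom f ^ i from rfl, ← map_zpow]
  rfl

theorem zpow_add_one_apply (f : Y ≃ₜ Y) (i : ℤ) (u : Y) :
    (f ^ (i + 1)) u = f ((f ^ i) u) := by
  rw [add_comm, zpow_one_add, mul_apply]

end Homeomorph

theorem Relation.TransGen.exists_chain {α : Type*} {r : α → α → Prop} {a b : α}
    (h : TransGen r a b) :
    ∃ n, 0 < n ∧ ∃ z : ℕ → α,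
      z 0 = a ∧ z n = b ∧ ∀ i < n, r (z i) (z (i + 1)) := by
  induction h with
  | @single b hab =>
    refine ⟨1, one_pos, fun i => if i = 0 then a else b, rfl, rfl, fun i hi => ?_⟩
    obtain rfl : i = 0 := by omega
    simpa using hab
  | @tail b c _ hbc ih =>
    obtain ⟨n, hn, z, hz0, hzn, hz⟩ := ih
    refine ⟨n + 1, n.succ_pos, fun i => if i ≤ n then z i else c, by simpa using hz0,
      by simp, fun i hi => ?_⟩
    rcases (Nat.lt_succ_iff.mp hi).lt_or_eq with hi | rfl
    · simpa [hi.le, Nat.succ_le_of_lt hi] using hz i hi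
    · simpa [hzn] using hbc

def PseudoOrbitStep (g : X → X) (δ : ℝ) (u v : X) : Prop :=
  dist (g u) v < δ

theorem chainTransitive_of_transGen {g : X → X}
    (h : ∀ δ > 0, ∀ x y, TransGen (PseudoOrbitStep g δ) x y) : ChainTransitive g := by
  intro δ hδ x y
  exact (h δ hδ x y).exists_chain

theorem reflTransGen_zpow_apply (f : X ≃ₜ X) {δ : ℝ} (hδ : 0 < δ) (u : X) {i j : ℤ}
    (hij : i ≤ j) : ReflTransGen (PseudoOrbitStep f δ) ((f ^ i) u) ((f ^ j) u) := by
  induction j, hij using Int.leInduction with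
  | base => exact .refl
  | succ j _ ih =>
    refine ih.tail ?_
    rw [PseudoOrbitStep, Homeomorph.zpow_add_one_apply, dist_self]
    exact hδ

theorem isTwoSidedLimitPseudoOrbit_of_eventually_eq {f : X ≃ X} {x : ℤ → X}
    (h : ∀ᶠ i in cofinite, f (x i) = x (i + 1)) : IsTwoSidedLimitPseudoOrbit f x :=
  tendsto_const_nhds.congr' (h.mono fun i hi => by simp [hi])

theorem isTwoSidedLimitPseudoOrbit_ite_zpow (f : X ≃ₜ X) (p q : X) :
    IsTwoSidedLimitPseudoOrbit f.toEquiv fun i => if i ≤ 0 then (f ^ i) p else (f ^ i) q := by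
  refine isTwoSidedLimitPseudoOrbit_of_eventually_eq
    ((eventually_cofinite_ne 0).mono fun i hi => ?_)
  rcases hi.lt_or_gt with hi | hi
  · simp [hi.le, Int.add_one_le_iff.mpr hi, Homeomorph.zpow_add_one_apply]
  · simp [not_le.mpr hi, not_le.mpr (hi.trans (lt_add_one i)), Homeomorph.zpow_add_one_apply]

theorem transGen_zpow_of_mapClusterPt_of_tendsto_atBot (f : X ≃ₜ X) {δ : ℝ} (hδ : 0 < δ)
    {x p w : X} (hp : MapClusterPt p atTop fun n : ℕ => (f ^ (n : ℤ)) x)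
    (hw : Tendsto (fun i : ℤ => dist ((f ^ i) w) ((f ^ i) p)) atBot (𝓝 0)) (j : ℤ) :
    TransGen (PseudoOrbitStep f δ) x ((f ^ j) w) := by
  obtain ⟨i, hwp, hij⟩ :=
    ((hw.eventually_lt_const (half_pos hδ)).and (eventually_le_atBot j)).exists
  obtain ⟨n, hxp, hn⟩ := ((hp.frequently (((f ^ i).continuous.tendsto p).eventually
    (Metric.ball_mem_nhds _ (half_pos hδ)))).and_eventually
      (eventually_ge_atTop (1 - i).toNat)).exists
  rw [← Homeomorph.mul_apply, ← zpow_add] at hxp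
  have hjump : PseudoOrbitStep f δ ((f ^ (i + n - 1)) x) ((f ^ i) w) := by
    rw [PseudoOrbitStep, ← Homeomorph.zpow_add_one_apply, sub_add_cancel]
    calc dist ((f ^ (i + n)) x) ((f ^ i) w)
        ≤ dist ((f ^ (i + n)) x) ((f ^ i) p) + dist ((f ^ i) w) ((f ^ i) p) :=
          dist_triangle_right _ _ _
      _ < δ / 2 + δ / 2 := add_lt_add hxp hwp
      _ = δ := add_halves δ
  have horbit := reflTransGen_zpow_apply f hδ x (i := 0) (j := i + n - 1) (by omega)
  rw [zpow_zero, Homeomorph.one_apply] at horbit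
  exact (TransGen.tail' horbit hjump).trans_left (reflTransGen_zpow_apply f hδ w hij)

theorem transGen_zpow_of_mapClusterPt_of_tendsto_atTop (f : X ≃ₜ X) {δ : ℝ} (hδ : 0 < δ)
    {y q w : X} (hq : MapClusterPt q atTop fun n : ℕ => (f ^ (-n : ℤ)) y)
    (hw : Tendsto (fun i : ℤ => dist ((f ^ i) w) ((f ^ i) q)) atTop (𝓝 0)) (j : ℤ) :
    TransGen (PseudoOrbitStep f δ) ((f ^ j) w) y := by
  obtain ⟨i, hwq, hij⟩ :=
    ((hw.eventually_lt_const (half_pos hδ)).and (eventually_ge_atTop (j + 1))).exists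
  obtain ⟨n, hyq, hn⟩ := ((hq.frequently (((f ^ i).continuous.tendsto q).eventually
    (Metric.ball_mem_nhds _ (half_pos hδ)))).and_eventually
      (eventually_ge_atTop i.toNat)).exists
  rw [← Homeomorph.mul_apply, ← zpow_add] at hyq
  have hjump : PseudoOrbitStep f δ ((f ^ (i - 1)) w) ((f ^ (i + -n)) y) := by
    rw [PseudoOrbitStep, ← Homeomorph.zpow_add_one_apply, sub_add_cancel]
    calc dist ((f ^ i) w) ((f ^ (i + -n)) y)
        ≤ dist ((f ^ i) w) ((f ^ i) q) + dist ((f ^ (i + -n)) y) ((f ^ i) q) :=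
          dist_triangle_right _ _ _
      _ < δ / 2 + δ / 2 := add_lt_add hwq hyq
      _ = δ := add_halves δ
  have horbit := reflTransGen_zpow_apply f hδ y (i := i + -n) (j := 0) (by omega)
  rw [zpow_zero, Homeomorph.one_apply] at horbit
  exact .trans_right (reflTransGen_zpow_apply f hδ w (by omega : j ≤ i - 1))
    (.head' hjump horbit)

/-- A homeomorphism of a compact metric space with the two-sided limit shadowing
property with gap `N` is chain-transitive. -/
theorem stmt2 [CompactSpace X] (f : X ≃ₜ X) (N : ℕ)
    (h : TwoSidedLimitShadowingGapN f.toEquiv N) :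
    ChainTransitive ⇑f := by
  refine chainTransitive_of_transGen fun δ hδ x y => ?_
  obtain ⟨p, -, hp⟩ := isCompact_univ.exists_mapClusterPt (f := atTop)
    (u := fun n : ℕ => (f ^ (n : ℤ)) x) (by simp)
  obtain ⟨q, -, hq⟩ := isCompact_univ.exists_mapClusterPt (f := atTop)
    (u := fun n : ℕ => (f ^ (-n : ℤ)) y) (by simp)
  obtain ⟨K, -, w, hbot, htop⟩ := h _ (isTwoSidedLimitPseudoOrbit_ite_zpow f p q)
  simp only [Homeomorph.coe_toEquiv_zpow] at hbot htop
  have hwp : Tendsto (fun i : ℤ => dist ((f ^ i) w) ((f ^ i) p)) atBot (𝓝 0) :=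
    hbot.congr' ((eventually_le_atBot 0).mono fun i hi => by simp [hi])
  have hwq : Tendsto (fun i : ℤ => dist ((f ^ i) ((f ^ K) w)) ((f ^ i) q)) atTop (𝓝 0) :=
    htop.congr' ((eventually_gt_atTop 0).mono fun i hi => by
      simp [not_le.mpr hi, add_comm K, zpow_add])
  have hxw := transGen_zpow_of_mapClusterPt_of_tendsto_atBot f hδ hp hwp K
  have hwy := transGen_zpow_of_mapClusterPt_of_tendsto_atTop f hδ hq hwq 0
  rw [zpow_zero, Homeomorph.one_apply] at hwy
  exact hxw.trans hwy
end

section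
/- Let (X,d) be a compact metric space and f : X → X a continuous map. If f is chain-transitive and has the shadowing property, then f is topologically transitive. -/
open Filter Topology

variable {X : Type*} [MetricSpace X]

/-- The shadowing property: every `δ`-pseudo-orbit is `ε`-shadowed. -/
def ShadowingProperty (g : X → X) : Prop :=
  ∀ ε : ℝ, 0 < ε → ∃ δ : ℝ, 0 < δ ∧ ∀ x : ℕ → X,
    (∀ i : ℕ, dist (g (x i)) (x (i + 1)) < δ) →
    ∃ y : X, ∀ i : ℕ, dist (g^[i] y) (x i) < ε

/-- `g` is topologically transitive. -/
def TopologicallyTransitive (g : X → X) : Prop :=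
  ∀ U V : Set X, IsOpen U → IsOpen V → U.Nonempty → V.Nonempty →
    ∃ N : ℕ, 0 < N ∧ (g^[N] '' U ∩ V).Nonempty

/-- A chain-transitive continuous map of a compact metric space with the shadowing
property is topologically transitive. -/
theorem stmt3 [CompactSpace X] (f : X → X) (hf : Continuous f)
    (hct : ChainTransitive f) (hsh : ShadowingProperty f) :
    TopologicallyTransitive f := by
  intro U V hU hV hUne hVne
  obtain ⟨u, hu⟩ := hUne
  obtain ⟨v, hv⟩ := hVne
  obtain ⟨εU, hεU, hballU⟩ := Metric.isOpen_iff.mp hU u hu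
  obtain ⟨εV, hεV, hballV⟩ := Metric.isOpen_iff.mp hV v hv
  set ε := min εU εV with hε
  have hεpos : 0 < ε := lt_min hεU hεV
  obtain ⟨δ, hδ, hshadow⟩ := hsh ε hεpos
  obtain ⟨n, hn, z, hz0, hzn, hz⟩ := hct δ hδ u v
  set x : ℕ → X := fun i => if i < n then z i else f^[i - n] v with hx
  have hpo : ∀ i, dist (f (x i)) (x (i + 1)) < δ := by
    intro i
    by_cases h1 : i + 1 < n
    · have h2 : i < n := Nat.lt_of_succ_lt h1
      simp only [hx, if_pos h1, if_pos h2]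
      exact hz i h2
    · by_cases h2 : i < n
      · have h3 : i + 1 = n := le_antisymm (Nat.succ_le_of_lt h2) (Nat.le_of_not_lt h1)
        simp only [hx, if_pos h2, if_neg h1, h3, Nat.sub_self,
          Function.iterate_zero, id_eq, if_neg (lt_irrefl n)]
        have := hz i h2
        rwa [h3, hzn] at this
      · have h4 : i + 1 - n = (i - n) + 1 := by omega
        simp only [hx, if_neg h1, if_neg h2, h4, Function.iterate_succ_apply',
          dist_self]
        exact hδ
  obtain ⟨y, hy⟩ := hshadow x hpo
  refine ⟨n, hn, f^[n] y, ⟨y, ?_, rfl⟩, ?_⟩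
  · apply hballU
    have h0 := hy 0
    simp only [hx, if_pos hn, hz0, Function.iterate_zero, id_eq] at h0
    exact Metric.mem_ball.mpr (lt_of_lt_of_le h0 (min_le_left _ _))
  · apply hballV
    have hn' := hy n
    simp only [hx, lt_irrefl, if_neg (lt_irrefl n), Nat.sub_self,
      Function.iterate_zero, id_eq] at hn'
    exact Metric.mem_ball.mpr (lt_of_lt_of_le hn' (min_le_right _ _))
end

section
/- Let (X,d) be a compact metric space and f : X → X a homeomorphism. If f has the two-sided limit shadowing property with a gap, then f is topologically transitive and has the shadowing property. -/
open Filter Topology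

variable {X : Type*} [MetricSpace X]

/-- The (two-sided) shadowing property for a bijection `f`. -/
def ShadowingPropertyZ (f : X ≃ X) : Prop :=
  ∀ ε : ℝ, 0 < ε → ∃ δ : ℝ, 0 < δ ∧ ∀ x : ℤ → X,
    (∀ i : ℤ, dist (f (x i)) (x (i + 1)) < δ) →
    ∃ y : X, ∀ i : ℤ, dist ((f ^ i) y) (x i) < ε


namespace TSLS5

variable {X : Type*} [MetricSpace X]

lemma zpow_add_apply (f : X ≃ₜ X) (i j : ℤ) (x : X) :
    (f.toEquiv ^ (i + j)) x = (f.toEquiv ^ i) ((f.toEquiv ^ j) x) := by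
  rw [zpow_add]; rfl

lemma zpow_step (f : X ≃ₜ X) (i : ℤ) (x : X) :
    (f.toEquiv ^ (i + 1)) x = f ((f.toEquiv ^ i) x) := by
  rw [add_comm, zpow_add_apply, zpow_one]; rfl

lemma zpow_step_symm (f : X ≃ₜ X) (i : ℤ) (x : X) :
    (f.toEquiv ^ (i - 1)) x = f.symm ((f.toEquiv ^ i) x) := by
  have h := zpow_step f (i - 1) x
  rw [sub_add_cancel] at h
  rw [h, Homeomorph.symm_apply_apply]

lemma zpow_natCast_apply (f : X ≃ₜ X) (n : ℕ) (x : X) :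
    (f.toEquiv ^ (n : ℤ)) x = (⇑f)^[n] x := by
  rw [zpow_natCast]; rfl

lemma zpow_neg_natCast_apply (f : X ≃ₜ X) (n : ℕ) (x : X) :
    (f.toEquiv ^ (-(n : ℤ))) x = (⇑f.symm)^[n] x := by
  rw [zpow_neg, ← inv_zpow, zpow_natCast]; rfl

lemma symm_zpow_apply (f : X ≃ₜ X) (i : ℤ) (x : X) :
    (f.symm.toEquiv ^ i) x = (f.toEquiv ^ (-i)) x := by
  have : f.symm.toEquiv = (f.toEquiv)⁻¹ := rfl
  rw [this, inv_zpow, ← zpow_neg]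

lemma continuous_zpow (f : X ≃ₜ X) (i : ℤ) :
    Continuous fun y : X => (f.toEquiv ^ i) y := by
  rcases le_or_gt 0 i with h | h
  · obtain ⟨n, rfl⟩ := Int.eq_ofNat_of_zero_le h
    simp only [zpow_natCast_apply]
    exact f.continuous.iterate n
  · obtain ⟨n, rfl⟩ : ∃ n : ℕ, i = -(n:ℤ) := ⟨(-i).toNat, by omega⟩
    simp only [zpow_neg_natCast_apply]
    exact f.symm.continuous.iterate n

lemma unif_cont (f : X ≃ₜ X) [CompactSpace X] {η : ℝ} (hη : 0 < η) :
    ∃ θ : ℝ, 0 < θ ∧ θ ≤ η ∧ ∀ x y : X, dist x y < θ → dist (f x) (f y) < η := by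
  have hu := CompactSpace.uniformContinuous_of_continuous f.continuous
  rw [Metric.uniformContinuous_iff] at hu
  obtain ⟨δ, hδ, hd⟩ := hu η hη
  exact ⟨min δ η, by positivity, min_le_right _ _,
    fun x y hxy => hd (lt_of_lt_of_le hxy (min_le_left _ _))⟩

/-- A finite `η`-chain from `a` to `b`, of positive length. -/
def Chain (f : X ≃ₜ X) (η : ℝ) (a b : X) : Prop :=
  ∃ L : ℤ, 0 < L ∧ ∃ c : ℤ → X, c 0 = a ∧ c L = b ∧
    ∀ i : ℤ, 0 ≤ i → i < L → dist (f (c i)) (c (i + 1)) < η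

lemma Chain.comp {f : X ≃ₜ X} {η : ℝ} {a b c : X}
    (h1 : Chain f η a b) (h2 : Chain f η b c) : Chain f η a c := by
  obtain ⟨L₁, hL₁, c₁, hc₁0, hc₁L, he₁⟩ := h1
  obtain ⟨L₂, hL₂, c₂, hc₂0, hc₂L, he₂⟩ := h2
  set d : ℤ → X := fun i => if i ≤ L₁ then c₁ i else c₂ (i - L₁) with hd
  have hdlow : ∀ i : ℤ, i ≤ L₁ → d i = c₁ i := fun i hi => if_pos hi
  have hdhigh : ∀ i : ℤ, L₁ < i → d i = c₂ (i - L₁) := fun i hi => if_neg (by omega)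
  refine ⟨L₁ + L₂, by omega, d, ?_, ?_, ?_⟩
  · rw [hdlow 0 (by omega), hc₁0]
  · rw [hdhigh _ (by omega)]
    have e : L₁ + L₂ - L₁ = L₂ := by ring
    rw [e, hc₂L]
  · intro i hi0 hiL
    rcases lt_trichotomy i L₁ with h | h | h
    · rw [hdlow i h.le]
      rcases eq_or_lt_of_le (by omega : i + 1 ≤ L₁) with h' | h'
      · rw [hdlow _ h'.le]
        exact he₁ i hi0 h
      · rw [hdlow _ h'.le]
        exact he₁ i hi0 h
    · subst h
      rw [hdlow _ le_rfl, hdhigh _ (by omega), hc₁L, ← hc₂0]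
      have e : i + 1 - i = 1 := by ring
      rw [e]
      have := he₂ 0 le_rfl hL₂
      rwa [zero_add] at this
    · rw [hdhigh _ h, hdhigh _ (by omega)]
      have e : i + 1 - L₁ = i - L₁ + 1 := by ring
      rw [e]
      exact he₂ (i - L₁) (by omega) (by omega)

lemma Chain.mono {f : X ≃ₜ X} {η η' : ℝ} {a b : X} (hle : η ≤ η')
    (h : Chain f η a b) : Chain f η' a b := by
  obtain ⟨L, hL, c, h0, hLc, he⟩ := h
  exact ⟨L, hL, c, h0, hLc, fun i h1 h2 => lt_of_lt_of_le (he i h1 h2) hle⟩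

/-- orbit segment then jump into `b`. -/
lemma chain_orbit_jump (f : X ≃ₜ X) {η : ℝ} {a b : X} {T : ℤ} (hT : 1 ≤ T)
    (hd : dist ((f.toEquiv ^ T) a) b < η) : Chain f η a b := by
  have hη : 0 < η := lt_of_le_of_lt dist_nonneg hd
  set c : ℤ → X := fun i => if i < T then (f.toEquiv ^ i) a else b with hc
  have hclow : ∀ i : ℤ, i < T → c i = (f.toEquiv ^ i) a := fun i hi => if_pos hi
  have hchigh : ∀ i : ℤ, T ≤ i → c i = b := fun i hi => if_neg (by omega)
  refine ⟨T, by omega, c, ?_, hchigh T le_rfl, ?_⟩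
  · rw [hclow 0 (by omega)]
    simp
  · intro i hi0 hiT
    rw [hclow i hiT, ← zpow_step]
    rcases eq_or_lt_of_le (by omega : i + 1 ≤ T) with h' | h'
    · rw [hchigh _ h'.ge, h']
      exact hd
    · rw [hclow _ h']
      simpa using hη

/-- pure backward orbit chain. -/
lemma chain_backward (f : X ≃ₜ X) {η : ℝ} (hη : 0 < η) {b : X} {S : ℤ} (hS : 1 ≤ S) :
    Chain f η ((f.toEquiv ^ (-S)) b) b := by
  refine ⟨S, by omega, fun i => (f.toEquiv ^ (i - S)) b, ?_, ?_, ?_⟩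
  · show (f.toEquiv ^ (0 - S)) b = _
    rw [zero_sub]
  · show (f.toEquiv ^ (S - S)) b = b
    rw [sub_self]
    rfl
  · intro i hi0 hiS
    show dist (f ((f.toEquiv ^ (i - S)) b)) ((f.toEquiv ^ (i + 1 - S)) b) < η
    rw [← zpow_step]
    have e : i - S + 1 = i + 1 - S := by ring
    rw [e]
    simpa using hη


/-- The ω-limit set of `a` (defined metrically). -/
def OmegaSet (f : X ≃ₜ X) (a : X) : Set X :=
  {w | ∀ η : ℝ, 0 < η → ∀ N : ℕ, ∃ n : ℕ, N ≤ n ∧ dist ((f.toEquiv ^ (n : ℤ)) a) w < η}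

lemma omegaSet_nonempty (f : X ≃ₜ X) [CompactSpace X] (a : X) :
    (OmegaSet f a).Nonempty := by
  obtain ⟨w, φ, hφ, hlim⟩ := CompactSpace.tendsto_subseq
    (fun n : ℕ => (f.toEquiv ^ (n : ℤ)) a)
  refine ⟨w, fun η hη N => ?_⟩
  obtain ⟨J, hJ⟩ := (Metric.tendsto_atTop.mp hlim) η hη
  exact ⟨φ (max J N), le_trans (le_max_right J N) hφ.le_apply,
    hJ (max J N) (le_max_left _ _)⟩

lemma omegaSet_isClosed (f : X ≃ₜ X) (a : X) : IsClosed (OmegaSet f a) := by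
  refine isClosed_of_closure_subset ?_
  intro w hw η hη N
  obtain ⟨v, hv, hvd⟩ := Metric.mem_closure_iff.mp hw (η/2) (by positivity)
  obtain ⟨n, hn, hd⟩ := hv (η/2) (by positivity) N
  refine ⟨n, hn, ?_⟩
  have htri := dist_triangle ((f.toEquiv ^ (n:ℤ)) a) v w
  rw [dist_comm] at hvd
  linarith

lemma omegaSet_fwd_inv (f : X ≃ₜ X) [CompactSpace X] (a : X) {w : X}
    (hw : w ∈ OmegaSet f a) : f w ∈ OmegaSet f a := by
  intro η hη N
  obtain ⟨θ, hθ, -, hmod⟩ := unif_cont f hη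
  obtain ⟨n, hn, hd⟩ := hw θ hθ N
  refine ⟨n + 1, by omega, ?_⟩
  have e : ((n:ℤ) + 1) = (n:ℤ) + 1 := rfl
  rw [show ((n+1 : ℕ) : ℤ) = (n:ℤ) + 1 by push_cast; ring, zpow_step]
  exact hmod _ _ hd

lemma omegaSet_bwd_inv (f : X ≃ₜ X) [CompactSpace X] (a : X) {w : X}
    (hw : w ∈ OmegaSet f a) : f.symm w ∈ OmegaSet f a := by
  intro η hη N
  obtain ⟨θ, hθ, -, hmod⟩ := unif_cont f.symm hη
  obtain ⟨n, hn, hd⟩ := hw θ hθ (N + 1)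
  refine ⟨n - 1, by omega, ?_⟩
  rw [show ((n - 1 : ℕ) : ℤ) = (n:ℤ) - 1 by omega, zpow_step_symm]
  exact hmod _ _ hd

/-- the ω-limit set is contained in any closed forward-invariant set containing `a`'s orbit. -/
lemma omegaSet_subset (f : X ≃ₜ X) (a : X) {S : Set X} (hcl : IsClosed S)
    (horb : ∀ n : ℕ, (f.toEquiv ^ (n:ℤ)) a ∈ S) : OmegaSet f a ⊆ S := by
  intro w hw
  rw [← hcl.closure_eq]
  rw [Metric.mem_closure_iff]
  intro η hη
  obtain ⟨n, -, hd⟩ := hw η hη 0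
  exact ⟨_, horb n, by rwa [dist_comm]⟩


lemma orbit_mem {f : X ≃ₜ X} {T : Set X} (hfwd : ∀ x ∈ T, f x ∈ T) {w : X} (hw : w ∈ T) :
    ∀ n : ℕ, (f.toEquiv ^ (n:ℤ)) w ∈ T := by
  intro n
  rw [zpow_natCast_apply]
  induction n with
  | zero => simpa using hw
  | succ k ih => rw [Function.iterate_succ_apply']; exact hfwd _ ih

/-- Birkhoff recurrence: every nonempty closed invariant set contains a recurrent point. -/
lemma exists_recurrent (f : X ≃ₜ X) [CompactSpace X] {S : Set X} (hne : S.Nonempty)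
    (hcl : IsClosed S) (hf : ∀ x ∈ S, f x ∈ S) (hf' : ∀ x ∈ S, f.symm x ∈ S) :
    ∃ w ∈ S, w ∈ OmegaSet f w := by
  set 𝒞 : Set (Set X) :=
    {T | T ⊆ S ∧ T.Nonempty ∧ IsClosed T ∧ (∀ x ∈ T, f x ∈ T) ∧ (∀ x ∈ T, f.symm x ∈ T)}
    with h𝒞
  have hS𝒞 : S ∈ 𝒞 := ⟨subset_rfl, hne, hcl, hf, hf'⟩
  have hchain : ∀ c ⊆ 𝒞, IsChain (· ⊆ ·) c → c.Nonempty → ∃ lb ∈ 𝒞, ∀ s ∈ c, lb ⊆ s := by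
    intro c hc hch hcne
    refine ⟨⋂₀ c, ?_, fun s hs => Set.sInter_subset_of_mem hs⟩
    have hnei : (⋂₀ c).Nonempty := by
      have : Nonempty c := hcne.to_subtype
      have := IsCompact.nonempty_iInter_of_directed_nonempty_isCompact_isClosed
        (fun s : c => (s : Set X))
        (by
          intro s t
          rcases hch.total s.2 t.2 with h | h
          exacts [⟨s, subset_rfl, h⟩, ⟨t, h, subset_rfl⟩])
        (fun s => (hc s.2).2.1) (fun s => (hc s.2).2.2.1.isCompact)
        (fun s => (hc s.2).2.2.1)
      rwa [Set.sInter_eq_iInter]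
    obtain ⟨s₀, hs₀⟩ := hcne
    refine ⟨(Set.sInter_subset_of_mem hs₀).trans (hc hs₀).1, hnei, 
      isClosed_sInter (fun s hs => (hc hs).2.2.1), ?_, ?_⟩
    · intro x hx
      rw [Set.mem_sInter] at hx ⊢
      exact fun t ht => (hc ht).2.2.2.1 x (hx t ht)
    · intro x hx
      rw [Set.mem_sInter] at hx ⊢
      exact fun t ht => (hc ht).2.2.2.2 x (hx t ht)
  obtain ⟨M, -, hMmin⟩ := zorn_superset_nonempty 𝒞 hchain S hS𝒞
  obtain ⟨hMS, ⟨w, hw⟩, hMcl, hMf, hMf'⟩ := hMmin.prop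
  have hωsub : OmegaSet f w ⊆ M := omegaSet_subset f w hMcl (orbit_mem hMf hw)
  have hω𝒞 : OmegaSet f w ∈ 𝒞 :=
    ⟨hωsub.trans hMS, omegaSet_nonempty f w, omegaSet_isClosed f w,
      fun x hx => omegaSet_fwd_inv f w hx, fun x hx => omegaSet_bwd_inv f w hx⟩
  have : OmegaSet f w = M := hMmin.eq_of_le hω𝒞 hωsub
  exact ⟨w, hMS hw, this ▸ hw⟩


/-- From the two-sided limit shadowing property: an `η`-chain from a backward
iterate of `w` to a forward iterate of `z`. -/
lemma chain_connect (f : X ≃ₜ X) [CompactSpace X]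
    (h : TwoSidedLimitShadowingWithGap f.toEquiv) (w z : X) {η : ℝ} (hη : 0 < η) :
    ∃ n m : ℤ, n ≤ -1 ∧ 1 ≤ m ∧ Chain f η ((f.toEquiv ^ n) w) ((f.toEquiv ^ m) z) := by
  obtain ⟨N, hN⟩ := h
  set x : ℤ → X := fun i => if i < 0 then (f.toEquiv ^ i) w else (f.toEquiv ^ i) z with hxdef
  have hxneg : ∀ i : ℤ, i < 0 → x i = (f.toEquiv ^ i) w := fun i hi => if_pos hi
  have hxpos : ∀ i : ℤ, 0 ≤ i → x i = (f.toEquiv ^ i) z := fun i hi => if_neg (by omega)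
  have hpo : IsTwoSidedLimitPseudoOrbit f.toEquiv x := by
    unfold IsTwoSidedLimitPseudoOrbit
    have hev : ∀ᶠ i in (cofinite : Filter ℤ),
        (0:ℝ) = dist (f.toEquiv (x i)) (x (i+1)) := by
      refine Filter.eventually_cofinite.mpr (Set.Finite.subset (Set.finite_singleton (-1)) ?_)
      intro i hi
      simp only [Set.mem_setOf_eq, Set.mem_singleton_iff] at hi ⊢
      by_contra hne
      apply hi
      have : f.toEquiv (x i) = f (x i) := rfl
      rcases lt_or_ge i 0 with hlt | hge
      · have hi1 : i + 1 < 0 := by omega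
        rw [this, hxneg i hlt, hxneg (i+1) hi1, ← zpow_step, dist_self]
      · rw [this, hxpos i (by omega), hxpos (i+1) (by omega), ← zpow_step, dist_self]
    exact tendsto_const_nhds.congr' hev
  obtain ⟨K, -, y, h1, h2⟩ := hN x hpo
  obtain ⟨θ, hθ, -, hmod⟩ := unif_cont f hη
  obtain ⟨i₀, hi₀le, hi₀d⟩ :=
    ((eventually_le_atBot (-1 : ℤ)).and (h1.eventually (gt_mem_nhds hθ))).exists
  rw [hxneg i₀ (by omega)] at hi₀d
  obtain ⟨j, hjge, hjd⟩ :=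
    ((eventually_ge_atTop (max 1 (i₀ + 2 - K))).and (h2.eventually (gt_mem_nhds hη))).exists
  have hj1 : 1 ≤ j := le_trans (le_max_left _ _) hjge
  have hjK : i₀ + 2 - K ≤ j := le_trans (le_max_right _ _) hjge
  rw [hxpos j (by omega)] at hjd
  set T : ℤ := K + j - 1 - i₀ with hT
  have hT1 : 1 ≤ T := by omega
  set c : ℤ → X := fun t => if t = 0 then (f.toEquiv ^ i₀) w
      else if t ≤ T then (f.toEquiv ^ (i₀ + t)) y else (f.toEquiv ^ j) z with hcdef
  have hc0 : c 0 = (f.toEquiv ^ i₀) w := if_pos rfl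
  have hcmid : ∀ t : ℤ, t ≠ 0 → t ≤ T → c t = (f.toEquiv ^ (i₀ + t)) y := by
    intro t h1' h2'
    rw [hcdef]
    dsimp only
    rw [if_neg h1', if_pos h2']
  have hcend : ∀ t : ℤ, T < t → c t = (f.toEquiv ^ j) z := by
    intro t h1'
    rw [hcdef]
    dsimp only
    rw [if_neg (by omega), if_neg (by omega)]
  refine ⟨i₀, j, by omega, hj1, T + 1, by omega, c, hc0, hcend _ (by omega), ?_⟩
  intro t ht0 htL
  rcases eq_or_lt_of_le ht0 with rfl | htpos
  · rw [zero_add, hc0, hcmid 1 (by omega) (by omega), zpow_step f i₀ y]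
    apply hmod
    rwa [dist_comm] at hi₀d
  · rcases eq_or_lt_of_le (by omega : t ≤ T) with heq | htT
    · rw [hcmid t (by omega) heq.le, hcend _ (by omega), ← zpow_step,
        show i₀ + t + 1 = K + j by omega]
      exact hjd
    · rw [hcmid t (by omega) (by omega), hcmid (t+1) (by omega) (by omega), ← zpow_step,
        show i₀ + t + 1 = i₀ + (t + 1) by ring, dist_self]
      exact hη


lemma omegaSet_zpow_mem (f : X ≃ₜ X) [CompactSpace X] {a w : X} (hw : w ∈ OmegaSet f a) :
    ∀ i : ℤ, (f.toEquiv ^ i) w ∈ OmegaSet f a := by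
  have hfwd : ∀ n : ℕ, (⇑f)^[n] w ∈ OmegaSet f a := by
    intro n
    induction n with
    | zero => simpa using hw
    | succ k ih => rw [Function.iterate_succ_apply']; exact omegaSet_fwd_inv f a ih
  have hbwd : ∀ n : ℕ, (⇑f.symm)^[n] w ∈ OmegaSet f a := by
    intro n
    induction n with
    | zero => simpa using hw
    | succ k ih => rw [Function.iterate_succ_apply']; exact omegaSet_bwd_inv f a ih
  intro i
  rcases le_or_gt 0 i with hi | hi
  · obtain ⟨n, rfl⟩ := Int.eq_ofNat_of_zero_le hi
    rw [zpow_natCast_apply]; exact hfwd n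
  · obtain ⟨n, rfl⟩ : ∃ n : ℕ, i = -(n:ℤ) := ⟨(-i).toNat, by omega⟩
    rw [zpow_neg_natCast_apply]; exact hbwd n

/-- Full chain connectivity: any point chains to any other point. -/
lemma chain_full (f : X ≃ₜ X) [CompactSpace X]
    (h : TwoSidedLimitShadowingWithGap f.toEquiv) (u v : X) {η : ℝ} (hη : 0 < η) :
    Chain f η u v := by
  obtain ⟨w, hwΩ, hwrec⟩ := exists_recurrent f (omegaSet_nonempty f u) (omegaSet_isClosed f u)
    (fun x hx => omegaSet_fwd_inv f u hx) (fun x hx => omegaSet_bwd_inv f u hx)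
  obtain ⟨z, hzA, hzrec⟩ := exists_recurrent f (omegaSet_nonempty f.symm v)
    (omegaSet_isClosed f.symm v)
    (fun x hx => by simpa using omegaSet_bwd_inv f.symm v hx)
    (fun x hx => omegaSet_fwd_inv f.symm v hx)
  -- chain 3 from the limit shadowing property
  obtain ⟨n₂, m₂, hn₂, hm₂, chain3⟩ := chain_connect f h w z hη
  -- chain 1 : u ⇝ w
  obtain ⟨T₁, hT₁, hd₁⟩ := hwΩ η hη 1
  have chain1 : Chain f η u w := chain_orbit_jump f (by exact_mod_cast hT₁) hd₁
  -- chain 2 : w ⇝ f^(n₂) w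
  obtain ⟨T₂, hT₂, hd₂⟩ := omegaSet_zpow_mem f hwrec n₂ η hη 1
  have chain2 : Chain f η w ((f.toEquiv ^ n₂) w) := chain_orbit_jump f (by exact_mod_cast hT₂) hd₂
  -- choose S with f^(-S) v near z
  obtain ⟨S, hS1, hdS⟩ := hzA (η/2) (by positivity) 1
  rw [symm_zpow_apply] at hdS
  -- choose n' with f^(n') z near z, n' > m₂
  obtain ⟨n', hn', hdn'⟩ := hzrec (η/2) (by positivity) (m₂.toNat + 1)
  have hm₂n' : m₂ < (n' : ℤ) := by
    have : m₂.toNat + 1 ≤ n' := hn'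
    omega
  -- chain 4 : f^(m₂) z ⇝ f^(-S) v
  have chain4 : Chain f η ((f.toEquiv ^ m₂) z) ((f.toEquiv ^ (-(S:ℤ))) v) := by
    refine chain_orbit_jump f (T := (n' : ℤ) - m₂) (by omega) ?_
    rw [← zpow_add_apply, show (n' : ℤ) - m₂ + m₂ = (n' : ℤ) by ring]
    calc dist ((f.toEquiv ^ (n' : ℤ)) z) ((f.toEquiv ^ (-(S:ℤ))) v)
        ≤ dist ((f.toEquiv ^ (n' : ℤ)) z) z + dist z ((f.toEquiv ^ (-(S:ℤ))) v) :=
          dist_triangle _ _ _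
      _ < η/2 + η/2 := add_lt_add hdn' (by rwa [dist_comm] at hdS)
      _ = η := by ring
  -- chain 5 : f^(-S) v ⇝ v
  have chain5 : Chain f η ((f.toEquiv ^ (-(S:ℤ))) v) v :=
    chain_backward f hη (by exact_mod_cast hS1)
  exact chain1.comp (chain2.comp (chain3.comp (chain4.comp chain5)))


lemma finite_shadowing (f : X ≃ₜ X) [CompactSpace X]
    (h : TwoSidedLimitShadowingWithGap f.toEquiv) {ε : ℝ} (hε : 0 < ε) :
    ∃ δ : ℝ, 0 < δ ∧ ∀ (n : ℕ) (c : ℤ → X),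
      (∀ i : ℤ, 0 ≤ i → i < n → dist (f (c i)) (c (i+1)) < δ) →
      ∃ y : X, ∀ i : ℤ, 0 ≤ i → i ≤ n → dist ((f.toEquiv ^ i) y) (c i) < ε := by
  by_contra hcon
  push_neg at hcon
  have hsel : ∀ k : ℕ, ∃ (n : ℕ) (c : ℤ → X),
      (∀ i : ℤ, 0 ≤ i → i < n → dist (f (c i)) (c (i+1)) < 1/(k+1)) ∧
      ∀ y : X, ∃ i : ℤ, 0 ≤ i ∧ i ≤ n ∧ ε ≤ dist ((f.toEquiv ^ i) y) (c i) := by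
    intro k
    obtain ⟨n, c, hc, hbad⟩ := hcon (1/(k+1)) (by positivity)
    exact ⟨n, c, hc, hbad⟩
  choose n c hchain hbad using hsel
  have hD : ∀ k : ℕ, Chain f (1/(k+1)) (c k (n k)) (c (k+1) 0) :=
    fun k => chain_full f h _ _ (by positivity)
  choose L hLpos d hd0 hdL hde using hD
  -- block lengths and blocks
  set M : ℕ → ℤ := fun k => (n k : ℤ) + L k with hM
  have hM1 : ∀ k, 1 ≤ M k := fun k => by have := hLpos k; simp only [hM]; omega
  set q : ℕ → ℤ → X := fun k i => if i ≤ (n k : ℤ) then c k i else d k (i - n k) with hq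
  have hqc : ∀ k (i : ℤ), i ≤ (n k : ℤ) → q k i = c k i := fun k i hi => if_pos hi
  have hqd : ∀ k (i : ℤ), (n k : ℤ) < i → q k i = d k (i - n k) := fun k i hi => if_neg (by omega)
  have hqend : ∀ k, q k (M k) = q (k+1) 0 := by
    intro k
    rw [hqd k _ (by have := hLpos k; simp only [hM]; omega), hqc (k+1) 0 (by positivity),
      show M k - (n k : ℤ) = L k by simp only [hM]; ring, hdL]
  have hqerr : ∀ k (i : ℤ), 0 ≤ i → i < M k →
      dist (f (q k i)) (q k (i+1)) < 1/(k+1) := by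
    intro k i hi0 hiM
    rcases lt_trichotomy i (n k : ℤ) with hlt | heq | hgt
    · rw [hqc k i (by omega), hqc k (i+1) (by omega)]
      exact hchain k i hi0 hlt
    · rw [hqc k i heq.le, hqd k (i+1) (by omega), heq,
        show (n k : ℤ) + 1 - (n k : ℤ) = 0 + 1 by ring, ← hd0 k]
      exact hde k 0 le_rfl (hLpos k)
    · rw [hqd k i hgt, hqd k (i+1) (by omega),
        show i + 1 - (n k : ℤ) = i - n k + 1 by ring]
      exact hde k (i - n k) (by omega) (by simp only [hM] at hiM; omega)
  -- starting positions
  set t : ℕ → ℤ := fun k => Nat.rec 0 (fun k' acc => acc + M k') k with ht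
  have ht0 : t 0 = 0 := rfl
  have htsucc : ∀ k, t (k+1) = t k + M k := fun k => rfl
  have htk : ∀ k : ℕ, (k : ℤ) ≤ t k := by
    intro k
    induction k with
    | zero => simp [ht0]
    | succ k' ih => rw [htsucc]; have := hM1 k'; push_cast; omega
  have htmono : ∀ k k' : ℕ, k ≤ k' → t k ≤ t k' := by
    intro k k' hk
    induction k' with
    | zero => simp_all
    | succ m ih =>
      rcases Nat.lt_or_ge k (m+1) with hlt | hge
      · rw [htsucc]; have := hM1 m; have := ih (by omega); omega
      · have : k = m + 1 := by omega
        subst this; rfl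
  -- block index of a position
  set B : ℤ → ℕ := fun i => Nat.findGreatest (fun k => decide (t k ≤ i)) i.toNat with hB
  have hBspec : ∀ i : ℤ, 0 ≤ i → t (B i) ≤ i := by
    intro i hi
    have := Nat.findGreatest_spec (P := fun k => decide (t k ≤ i) = true) (n := i.toNat) (m := 0)
      (Nat.zero_le _) (by simp [ht0, hi])
    simpa [hB] using this
  have hBle : ∀ (i : ℤ) (k : ℕ), 0 ≤ i → t k ≤ i → k ≤ B i := by
    intro i k hi hk
    refine Nat.le_findGreatest ?_ (by simpa using hk)
    have := htk k
    omega
  have hBeq : ∀ (i : ℤ) (k : ℕ), 0 ≤ i → t k ≤ i → i < t (k+1) → B i = k := by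
    intro i k hi h1 h2
    have hle : k ≤ B i := hBle i k hi h1
    by_contra hne
    have hk1 : k + 1 ≤ B i := by omega
    have := (htmono (k+1) (B i) hk1).trans (hBspec i hi)
    omega
  have hBnext : ∀ i : ℤ, 0 ≤ i → i < t (B i + 1) := by
    intro i hi
    by_contra hcon'
    push_neg at hcon'
    have := hBle i (B i + 1) hi hcon'
    omega
  -- the glued pseudo-orbit
  set z : ℤ → X := fun i => if 0 ≤ i then q (B i) (i - t (B i)) else (f.toEquiv ^ i) (c 0 0)
    with hz
  have hzpos : ∀ i : ℤ, 0 ≤ i → z i = q (B i) (i - t (B i)) := fun i hi => if_pos hi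
  have hzneg : ∀ i : ℤ, i < 0 → z i = (f.toEquiv ^ i) (c 0 0) := fun i hi => if_neg (by omega)
  have hB0 : B 0 = 0 := by
    refine hBeq 0 0 le_rfl (by rw [ht0]) ?_
    have h1 : t (0+1) = t 0 + M 0 := htsucc 0
    have h2' := ht0
    have := hM1 0
    omega
  have hz0 : z 0 = c 0 0 := by
    rw [hzpos 0 le_rfl, hB0, ht0, sub_zero, hqc 0 0 (by positivity)]
  -- block window values
  have hzwin : ∀ (k : ℕ) (i : ℤ), t k ≤ i → i < t (k+1) → z i = q k (i - t k) := by
    intro k i h1 h2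
    have hi0 : 0 ≤ i := le_trans (le_trans (by positivity) (htk k)) h1
    rw [hzpos i hi0, hBeq i k hi0 h1 h2]
  -- error bound for nonnegative positions
  have herr : ∀ i : ℤ, 0 ≤ i → dist (f (z i)) (z (i+1)) < 1/(B i + 1) := by
    intro i hi
    set k := B i with hk
    have h1 : t k ≤ i := hBspec i hi
    have h2 : i < t (k+1) := hBnext i hi
    rw [hzwin k i h1 h2]
    have e1 := htsucc k
    have e2 := htsucc (k+1)
    rcases eq_or_lt_of_le (by omega : i + 1 ≤ t k + M k) with heq | hlt
    · have hz1 : z (i+1) = q (k+1) 0 := by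
        rw [hzwin (k+1) (i+1) (by omega) (by have := hM1 (k+1); omega), e1, heq]
        rw [show t k + M k - (t k + M k) = 0 by ring]
      rw [hz1, ← hqend k, show q k (M k) = q k (i - t k + 1) by rw [show M k = i - t k + 1 by omega]]
      exact hqerr k (i - t k) (by omega) (by omega)
    · rw [hzwin k (i+1) (by omega) (by omega),
        show i + 1 - t k = i - t k + 1 by ring]
      exact hqerr k (i - t k) (by omega) (by omega)
  -- z is a two-sided limit pseudo-orbit
  have hpo : IsTwoSidedLimitPseudoOrbit f.toEquiv z := by
    unfold IsTwoSidedLimitPseudoOrbit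
    rw [Metric.tendsto_nhds]
    intro ε' hε'
    obtain ⟨k₀, hk₀⟩ := exists_nat_one_div_lt hε'
    rw [Filter.eventually_cofinite]
    refine Set.Finite.subset (Set.finite_Icc (0 : ℤ) (t (k₀+1))) ?_
    intro i hi
    simp only [Set.mem_setOf_eq, not_lt] at hi
    by_contra hmem
    simp only [Set.mem_Icc, not_and_or, not_le] at hmem
    have herr0 : ∀ j : ℤ, j < 0 → dist (f.toEquiv (z j)) (z (j+1)) = 0 := by
      intro j hj
      have : f.toEquiv (z j) = f (z j) := rfl
      rcases lt_or_ge j (-1) with hj1 | hj1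
      · rw [this, hzneg j hj, hzneg (j+1) (by omega), ← zpow_step, dist_self]
      · have : j = -1 := by omega
        subst this
        rw [‹f.toEquiv (z (-1)) = f (z (-1))›, hzneg (-1) (by omega), ← zpow_step,
          show (-1 : ℤ) + 1 = 0 by ring, zpow_zero, hz0]
        simp [dist_self]
    rcases hmem with hneg | hbig
    · -- i < 0 : error is 0
      rw [herr0 i hneg] at hi
      simp at hi
      linarith
    · -- i > t (k₀+1) : B i ≥ k₀ + 1 ≥ k₀, error < 1/(k₀+1) < ε'
      have hi0 : (0:ℤ) ≤ i := le_trans (le_trans (by positivity) (htk (k₀+1))) hbig.le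
      have hBk : k₀ + 1 ≤ B i := hBle i (k₀+1) hi0 hbig.le
      have hlt : dist (f (z i)) (z (i+1)) < 1/(B i + 1) := herr i hi0
      have hmono : (1 : ℝ)/(B i + 1) ≤ 1/(k₀ + 1) := by
        apply one_div_le_one_div_of_le (by positivity)
        have : (k₀ : ℝ) + 1 ≤ (B i : ℝ) := by exact_mod_cast Nat.le_of_succ_le_succ (Nat.succ_le_succ hBk)
        linarith
      have : dist (f.toEquiv (z i)) (z (i+1)) < ε' := lt_of_lt_of_le hlt (le_trans hmono hk₀.le)
      have habs : dist (dist (f.toEquiv (z i)) (z (i+1))) 0 < ε' := by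
        rw [Real.dist_eq, sub_zero, abs_of_nonneg dist_nonneg]
        exact this
      exact absurd habs (not_lt.mpr hi)
  -- apply the hypothesis and derive a contradiction
  obtain ⟨N, hN⟩ := h
  obtain ⟨K, -, y, -, h2⟩ := hN z hpo
  obtain ⟨I, hI⟩ := Filter.eventually_atTop.mp (h2.eventually (gt_mem_nhds hε))
  set k : ℕ := (max I 0).toNat with hkdef
  have hIk : I ≤ t k := by
    have h1 : (k : ℤ) = max I 0 := Int.toNat_of_nonneg (le_max_right I 0)
    have := htk k
    have := le_max_left I 0
    omega
  obtain ⟨i, hi0, hin, hibad⟩ := hbad k ((f.toEquiv ^ (K + t k)) y)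
  have hwin : z (t k + i) = c k i := by
    rw [hzwin k (t k + i) (by omega)
      (by rw [htsucc]; have := hLpos k; simp only [hM]; omega),
      show t k + i - t k = i by ring, hqc k i hin]
  have hdist : dist ((f.toEquiv ^ (K + (t k + i))) y) (z (t k + i)) < ε :=
    hI (t k + i) (by omega)
  rw [hwin] at hdist
  have happ : (f.toEquiv ^ i) ((f.toEquiv ^ (K + t k)) y) = (f.toEquiv ^ (K + (t k + i))) y := by
    rw [← zpow_add_apply, show i + (K + t k) = K + (t k + i) by ring]
  rw [happ] at hibad
  exact absurd hdist (not_lt.mpr hibad)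


lemma shadowing (f : X ≃ₜ X) [CompactSpace X]
    (h : TwoSidedLimitShadowingWithGap f.toEquiv) : ShadowingPropertyZ f.toEquiv := by
  intro ε hε
  obtain ⟨δ, hδ, hFS⟩ := finite_shadowing f h (half_pos hε)
  refine ⟨δ, hδ, fun x hx => ?_⟩
  have hwin : ∀ k : ℕ, ∃ u : X, ∀ i : ℤ, |i| ≤ k → dist ((f.toEquiv ^ i) u) (x i) < ε/2 := by
    intro k
    obtain ⟨y, hy⟩ := hFS (2*k) (fun i => x (i - k)) (fun i hi0 hik => by
      have := hx (i - k)
      rwa [show i - k + 1 = i + 1 - k by ring] at this)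
    refine ⟨(f.toEquiv ^ (k : ℤ)) y, fun i hik => ?_⟩
    have habs := abs_le.mp hik
    have := hy (i + k) (by omega) (by push_cast; omega)
    rwa [zpow_add_apply, show i + (k:ℤ) - k = i by ring] at this
  choose u hu using hwin
  obtain ⟨y, φ, hφ, hlim⟩ := CompactSpace.tendsto_subseq u
  refine ⟨y, fun i => ?_⟩
  have hconv : Tendsto (fun j : ℕ => dist ((f.toEquiv ^ i) (u (φ j))) (x i)) atTop
      (𝓝 (dist ((f.toEquiv ^ i) y) (x i))) :=
    (Tendsto.comp (continuous_zpow f i).continuousAt hlim).dist tendsto_const_nhds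
  have hle : dist ((f.toEquiv ^ i) y) (x i) ≤ ε/2 := by
    refine le_of_tendsto hconv ?_
    filter_upwards [eventually_ge_atTop i.natAbs] with j hj
    exact (hu (φ j) i (by
      rw [Int.abs_eq_natAbs]
      exact_mod_cast hj.trans hφ.le_apply)).le
  linarith

lemma transitive (f : X ≃ₜ X) [CompactSpace X]
    (h : TwoSidedLimitShadowingWithGap f.toEquiv) : TopologicallyTransitive (⇑f) := by
  intro U V hU hV ⟨u, hu⟩ ⟨v, hv⟩
  obtain ⟨ε₁, hε₁, hball₁⟩ := Metric.isOpen_iff.mp hU u hu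
  obtain ⟨ε₂, hε₂, hball₂⟩ := Metric.isOpen_iff.mp hV v hv
  set ε := min ε₁ ε₂ with hεdef
  obtain ⟨δ, hδ, hsh⟩ := shadowing f h ε (by positivity)
  obtain ⟨L, hL, c, hc0, hcL, hce⟩ := chain_full f h u v hδ
  set x : ℤ → X := fun i =>
    if i < 0 then (f.toEquiv ^ i) u else if i ≤ L then c i else (f.toEquiv ^ (i - L)) v
    with hxdef
  have hxneg : ∀ i : ℤ, i < 0 → x i = (f.toEquiv ^ i) u := fun i hi => if_pos hi
  have hxmid : ∀ i : ℤ, 0 ≤ i → i ≤ L → x i = c i := fun i h0 hL' => by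
    rw [hxdef]; dsimp only; rw [if_neg (by omega), if_pos hL']
  have hxpos : ∀ i : ℤ, L < i → x i = (f.toEquiv ^ (i - L)) v := fun i hi => by
    rw [hxdef]; dsimp only; rw [if_neg (by omega), if_neg (by omega)]
  have hxerr : ∀ i : ℤ, dist (f.toEquiv (x i)) (x (i + 1)) < δ := by
    intro i
    have hcoe : f.toEquiv (x i) = f (x i) := rfl
    rcases lt_trichotomy i (-1 : ℤ) with hi | hi | hi
    · rw [hcoe, hxneg i (by omega), hxneg (i+1) (by omega), ← zpow_step, dist_self]
      exact hδ
    · subst hi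
      rw [hcoe, hxneg (-1) (by omega), ← zpow_step, show (-1:ℤ) + 1 = 0 by ring, zpow_zero,
        hxmid 0 le_rfl hL.le, hc0]
      simpa using hδ
    · have hi0 : 0 ≤ i := by omega
      rcases lt_trichotomy i L with hiL | hiL | hiL
      · rw [hcoe, hxmid i hi0 hiL.le, hxmid (i+1) (by omega) (by omega)]
        exact hce i hi0 hiL
      · subst hiL
        rw [hcoe, hxmid i hi0 le_rfl, hcL, hxpos (i+1) (by omega),
          show i + 1 - i = 0 + 1 by ring, zpow_step, zpow_zero]
        simpa using hδ
      · rw [hcoe, hxpos i hiL, hxpos (i+1) (by omega), ← zpow_step,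
          show i - L + 1 = i + 1 - L by ring, dist_self]
        exact hδ
  obtain ⟨y, hy⟩ := hsh x hxerr
  have hy0 : y ∈ U := by
    have := hy 0
    rw [hxmid 0 le_rfl hL.le, hc0, zpow_zero] at this
    have h' : dist y u < ε := by simpa using this
    exact hball₁ (Metric.mem_ball.mpr (lt_of_lt_of_le h' (min_le_left _ _)))
  have hyL : (f.toEquiv ^ L) y ∈ V := by
    have := hy L
    rw [hxmid L hL.le le_rfl, hcL] at this
    exact hball₂ (by
      rw [Metric.mem_ball]
      exact lt_of_lt_of_le this (min_le_right _ _))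
  refine ⟨L.toNat, by omega, (f.toEquiv ^ L) y, ⟨y, hy0, ?_⟩, hyL⟩
  rw [← zpow_natCast_apply, Int.toNat_of_nonneg hL.le]

end TSLS5

/-- A homeomorphism of a compact metric space with the two-sided limit shadowing
property with a gap is topologically transitive and has the shadowing property. -/
theorem stmt5 [CompactSpace X] (f : X ≃ₜ X)
    (h : TwoSidedLimitShadowingWithGap f.toEquiv) :
    TopologicallyTransitive ⇑f ∧ ShadowingPropertyZ f.toEquiv :=
  ⟨TSLS5.transitive f h, TSLS5.shadowing f h⟩
end

section
/- Let (X,d) be a compact metric space containing at least two points and f : X → X a homeomorphism with the two-sided limit shadowing property. Then the topological entropy of f is positive. -/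
open Filter Topology

variable {X : Type*} [MetricSpace X]

/-- `f` has the two-sided limit shadowing property. -/
def TwoSidedLimitShadowing (f : X ≃ X) : Prop :=
  ∀ x : ℤ → X, IsTwoSidedLimitPseudoOrbit f x →
    ∃ y : X, Tendsto (fun i : ℤ => dist ((f ^ i) y) (x i)) cofinite (𝓝 0)

/-!
On a compact space, two-sided limit shadowing gives chain transitivity: glue the backward orbit
of an ω-limit point `w` of `u` to the forward orbit of an α-limit point `w'` of `v`; the limit
shadow of this pseudo-orbit leads from near the orbit of `w` to near the orbit of `w'`, and `u`,
`v` chain to and from those orbits. Gluing the orbit of `p` to the orbit of `f p` instead (a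
phase slip) produces chains of lengths `ℓ` and `ℓ + 1` between the same two points, so `f` is
chain mixing. Two-sided limit shadowing also implies shadowing: otherwise concatenate ever finer
chains that cannot be `ε`-shadowed into one limit pseudo-orbit; its limit shadow eventually stays
`ε`-close to it, hence `ε`-shadows one of those chains.

Shadowing and chain mixing give positive entropy. For `a ≠ b` and `ε = d(a, b) / 4`, chain
mixing gives a common length `T` for chains between any two of `a`, `b`, so every word in `a`,
`b` is traced by a chain visiting its letters at times `0, T, 2T, …`. Shadowing turns the `2 ^ n` words of
length `n` into orbits that are `2ε`-apart at some time below `T n`, so the entropy is at least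
`log 2 / T`.
-/

open Finset

section Chains

def HasChain (f : X → X) (δ : ℝ) (u v : X) (n : ℕ) : Prop :=
  ∃ c : ℕ → X, c 0 = u ∧ c n = v ∧ ∀ i < n, dist (f (c i)) (c (i + 1)) < δ

variable {f : X → X} {δ : ℝ} {u v w : X} {m n : ℕ}

lemma hasChain_one (h : dist (f u) v < δ) : HasChain f δ u v 1 :=
  ⟨fun i => if i = 0 then u else v, rfl, rfl, fun i hi => by simpa [Nat.lt_one_iff.1 hi] using h⟩

lemma exists_append_of_hasChain {c : ℕ → X} (hc : ∀ i < m, dist (f (c i)) (c (i + 1)) < δ)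
    (h : HasChain f δ (c m) v n) :
    ∃ e : ℕ → X, (∀ i ≤ m, e i = c i) ∧ e (m + n) = v ∧
      ∀ i < m + n, dist (f (e i)) (e (i + 1)) < δ := by
  obtain ⟨d, hd0, hdn, hd⟩ := h
  set e : ℕ → X := fun i => if i ≤ m then c i else d (i - m)
  have he_le : ∀ i ≤ m, e i = c i := fun i hi => if_pos hi
  have he_ge : ∀ i ≥ m, e i = d (i - m) := fun i hi => by
    rcases hi.eq_or_lt with rfl | hi
    · simp [e, hd0]
    · exact if_neg hi.not_ge
  refine ⟨e, he_le, by simp [he_ge, hdn], fun i hi => ?_⟩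
  rcases lt_or_ge i m with him | him
  · rw [he_le i him.le, he_le (i + 1) him]
    exact hc i him
  · rw [he_ge i him, he_ge (i + 1) (by omega), Nat.sub_add_comm him]
    exact hd _ (by omega)

lemma HasChain.trans (h₁ : HasChain f δ u v m) (h₂ : HasChain f δ v w n) :
    HasChain f δ u w (m + n) := by
  obtain ⟨c, rfl, rfl, hc⟩ := h₁
  obtain ⟨e, he, hen, hstep⟩ := exists_append_of_hasChain hc h₂
  exact ⟨e, he 0 (Nat.zero_le m), hen, hstep⟩

lemma HasChain.loop_mul (h : HasChain f δ u u m) (k : ℕ) : HasChain f δ u u (k * m) := by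
  induction k with
  | zero => exact ⟨fun _ => u, rfl, rfl, by simp⟩
  | succ k ih => simpa [Nat.succ_mul] using ih.trans h

end Chains

lemma Nat.exists_eq_mul_add_mul_succ {m n : ℕ} (hm : 0 < m) (hn : m * m ≤ n) :
    ∃ a b : ℕ, n = a * m + b * (m + 1) := by
  refine ⟨n / m - n % m, n % m, ?_⟩
  have h1 : n % m < m := Nat.mod_lt n hm
  have h2 : m ≤ n / m := (Nat.le_div_iff_mul_le hm).2 hn
  have h3 : n = m * (n / m) + n % m := (Nat.div_add_mod n m).symm
  have h4 : n % m ≤ n / m := by omega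
  nlinarith [Nat.sub_add_cancel h4]

section PartialSums

variable {L : ℕ → ℕ}

lemma exists_eq_sum_range_add (hL : ∀ k, 0 < L k) (i : ℕ) :
    ∃ k, ∃ t < L k, i = ∑ j ∈ range k, L j + t := by
  induction i with
  | zero => exact ⟨0, 0, hL 0, by simp⟩
  | succ i ih =>
    obtain ⟨k, t, ht, rfl⟩ := ih
    rcases (Nat.succ_le_of_lt ht).lt_or_eq with ht' | ht'
    · exact ⟨k, t + 1, ht', by omega⟩
    · exact ⟨k + 1, 0, hL _, by rw [sum_range_succ]; omega⟩

lemma sum_range_add_lt {k k' t : ℕ} (ht : t < L k) (hk : k < k') :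
    ∑ j ∈ range k, L j + t < ∑ j ∈ range k', L j :=
  calc ∑ j ∈ range k, L j + t < ∑ j ∈ range (k + 1), L j := by rw [sum_range_succ]; omega
    _ ≤ ∑ j ∈ range k', L j := sum_le_sum_of_subset (range_mono hk)

lemma eq_of_sum_range_add_eq {k k' t t' : ℕ} (ht : t < L k) (ht' : t' < L k')
    (h : ∑ j ∈ range k, L j + t = ∑ j ∈ range k', L j + t') : k = k' ∧ t = t' := by
  have hk : k = k' := by
    by_contra hne
    rcases Nat.lt_or_gt_of_ne hne with hlt | hlt
    · linarith [sum_range_add_lt ht hlt]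
    · linarith [sum_range_add_lt ht' hlt]
  subst hk
  exact ⟨rfl, by omega⟩

end PartialSums

lemma exists_concat_chains {f : X → X} {δ : ℕ → ℝ} {L : ℕ → ℕ} (hL : ∀ k, 0 < L k)
    {C : ℕ → ℕ → X} (hC : ∀ k, C k (L k) = C (k + 1) 0)
    (hchain : ∀ k, ∀ t < L k, dist (f (C k t)) (C k (t + 1)) < δ k) :
    ∃ (g : ℕ → X) (K : ℕ → ℕ), Tendsto K atTop atTop ∧
      (∀ i, dist (f (g i)) (g (i + 1)) < δ (K i)) ∧
      ∀ k, ∀ t ≤ L k, g (∑ j ∈ range k, L j + t) = C k t := by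
  choose K T hT hKT using exists_eq_sum_range_add hL
  set g : ℕ → X := fun i => C (K i) (T i)
  have hg_lt : ∀ k, ∀ t < L k, g (∑ j ∈ range k, L j + t) = C k t := fun k t ht => by
    obtain ⟨hk, ht⟩ := eq_of_sum_range_add_eq (hT _) ht (hKT _).symm
    simp only [g, hk, ht]
  have hg_le : ∀ k, ∀ t ≤ L k, g (∑ j ∈ range k, L j + t) = C k t := by
    intro k t ht
    rcases ht.lt_or_eq with ht | rfl
    · exact hg_lt k t ht
    · rw [← sum_range_succ, ← add_zero (∑ j ∈ range (k + 1), L j), hg_lt _ _ (hL _), hC]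
  refine ⟨g, K, ?_, fun i => ?_, hg_le⟩
  · refine tendsto_atTop_atTop.2 fun n => ⟨∑ j ∈ range n, L j, fun i hi => ?_⟩
    by_contra! hlt
    linarith [sum_range_add_lt (hT i) hlt, hKT i]
  · have hnext := hg_le (K i) (T i + 1) (hT i)
    rw [← add_assoc, ← hKT] at hnext
    simpa only [g, hnext] using hchain _ _ (hT i)

section Entropy

open Dynamics Set
open scoped Uniformity

lemma isDynNetIn_of_pairwise_le_dist {f : X → X} {r : ℝ} {n : ℕ} {s : Set X}
    (hs : s.Pairwise fun x y => ∃ k < n, 2 * r ≤ dist (f^[k] x) (f^[k] y)) :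
    IsDynNetIn f univ {q | dist q.1 q.2 < r} n s := by
  refine ⟨subset_univ s, fun x hx y hy hxy => disjoint_left.2 fun z hzx hzy => ?_⟩
  obtain ⟨k, hk, hsep⟩ := hs hx hy hxy
  have h₁ : dist (f^[k] x) (f^[k] z) < r := mem_ball_dynEntourage.1 hzx k hk
  have h₂ : dist (f^[k] y) (f^[k] z) < r := mem_ball_dynEntourage.1 hzy k hk
  linarith [dist_triangle_right (f^[k] x) (f^[k] y) (f^[k] z)]

lemma pow_card_le_netMaxcard {ι : Type*} [Fintype ι] {f : X → X} {p : ι → X} {ε : ℝ} {T : ℕ}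
    (hε : 0 < ε) (hT : 0 < T) (hp : Pairwise fun s t => 4 * ε ≤ dist (p s) (p t))
    (hY : ∀ n (w : Fin n → ι), ∃ y, ∀ j : Fin n, dist (f^[j * T] y) (p (w j)) ≤ ε) (n : ℕ) :
    ((Fintype.card ι ^ n : ℕ) : ℕ∞) ≤ netMaxcard f univ {q | dist q.1 q.2 < ε} (T * n) := by
  classical
  choose Y hY using hY n
  have hsep : ∀ v v', v ≠ v' → ∃ k < T * n, 2 * ε ≤ dist (f^[k] (Y v)) (f^[k] (Y v')) := by
    intro v v' hvv'
    obtain ⟨j, hj⟩ := Function.ne_iff.1 hvv'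
    refine ⟨j * T, by nlinarith [j.isLt], ?_⟩
    have := dist_triangle4 (p (v j)) (f^[j * T] (Y v)) (f^[j * T] (Y v')) (p (v' j))
    linarith [hp hj, hY v j, hY v' j, dist_comm (p (v j)) (f^[j * T] (Y v))]
  have hinj : Function.Injective Y := fun v v' h => by
    by_contra hvv'
    obtain ⟨k, -, hk⟩ := hsep v v' hvv'
    rw [h, dist_self] at hk
    linarith
  have hnet : IsDynNetIn f univ {q | dist q.1 q.2 < ε} (T * n) (univ.image Y : Finset X) := by
    refine isDynNetIn_of_pairwise_le_dist fun x hx y hy hxy => ?_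
    simp only [Finset.coe_image, Finset.coe_univ, image_univ, Set.mem_range] at hx hy
    obtain ⟨v, rfl⟩ := hx
    obtain ⟨v', rfl⟩ := hy
    exact hsep v v' fun h => hxy (h ▸ rfl)
  simpa [Finset.card_image_of_injective _ hinj] using hnet.card_le_netMaxcard

open ExpGrowth in
lemma coverEntropy_pos_of_pow_le_netMaxcard {Z : Type*} [UniformSpace Z] {f : Z → Z}
    {U : SetRel Z Z} (hU : U ∈ 𝓤 Z) {T b : ℕ} (hT : T ≠ 0) (hb : 1 < b)
    (h : ∀ n, ((b ^ n : ℕ) : ℕ∞) ≤ netMaxcard f univ U (T * n)) :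
    0 < coverEntropy f univ := by
  have hmono : Monotone fun n => (netMaxcard f univ U n : ENNReal) :=
    ENat.toENNReal_mono.comp (netMaxcard_monotone_time f univ U)
  have hlog : ENNReal.log b ≤ T * netEntropyEntourage f univ U := by
    rw [← expGrowthSup_pow, netEntropyEntourage, ← hmono.expGrowthSup_comp_mul hT]
    exact expGrowthSup_monotone fun n => by
      simpa using ENat.toENNReal_mono (h n)
  have hpos : 0 < (T : EReal) * coverEntropy f univ :=
    ((ENNReal.zero_lt_log_iff.2 (by exact_mod_cast hb)).trans_le hlog).trans_le
      (mul_le_mul_of_nonneg_left (netEntropyEntourage_le_coverEntropy f univ hU) (by positivity))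
  rcases EReal.mul_pos_iff.1 hpos with h | h
  · exact h.2
  · exact absurd h.1 (not_lt.2 (by positivity))

end Entropy

section ShadowingEntropy

open Dynamics Set

def HasShadowing (f : X → X) : Prop :=
  ∀ ε > 0, ∃ δ > 0, ∀ (n : ℕ) (c : ℕ → X), (∀ i < n, dist (f (c i)) (c (i + 1)) < δ) →
    ∃ y, ∀ i ≤ n, dist (f^[i] y) (c i) ≤ ε

def IsChainMixing (f : X → X) : Prop :=
  ∀ δ > 0, ∀ u v : X, ∀ᶠ n in atTop, HasChain f δ u v n

lemma exists_chain_of_word {ι : Type*} {f : X → X} {δ : ℝ} {p : ι → X} {T : ℕ} (hT : 0 < T)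
    (h : ∀ s t, HasChain f δ (p s) (p t) T) (w : ℕ → ι) :
    ∃ c : ℕ → X, (∀ i, dist (f (c i)) (c (i + 1)) < δ) ∧ ∀ j, c (j * T) = p (w j) := by
  choose d hd0 hdT hd using h
  obtain ⟨c, -, -, hc, hcw⟩ := exists_concat_chains (δ := fun _ => δ) (fun _ => hT)
    (C := fun k => d (w k) (w (k + 1))) (fun k => by simp only [hdT, hd0]) (fun k => hd _ _)
  exact ⟨c, hc, fun j => by simpa [mul_comm, hd0] using hcw j 0 hT.le⟩

theorem coverEntropy_pos_of_hasShadowing {f : X → X} (hs : HasShadowing f)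
    (hm : IsChainMixing f) {a b : X} (hab : a ≠ b) : 0 < coverEntropy f univ := by
  set ε := dist a b / 4
  have hε : 0 < ε := by have := dist_pos.2 hab; positivity
  obtain ⟨δ, hδ, hshadow⟩ := hs ε hε
  set p : Bool → X := fun s => cond s a b
  obtain ⟨T, hT, hchain⟩ : ∃ T, 0 < T ∧ ∀ s t, HasChain f δ (p s) (p t) T :=
    ((eventually_gt_atTop 0).and (eventually_all.2 fun s =>
      eventually_all.2 fun t => hm δ hδ (p s) (p t))).exists
  have hp : Pairwise fun s t => 4 * ε ≤ dist (p s) (p t) := by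
    have h4 : 4 * ε = dist a b := by ring
    rintro (_ | _) (_ | _) h <;> simp [p, h4, dist_comm] at h ⊢
  have hword : ∀ n (v : Fin n → Bool), ∃ y, ∀ j : Fin n, dist (f^[j * T] y) (p (v j)) ≤ ε := by
    intro n v
    obtain ⟨c, hc, hcw⟩ :=
      exists_chain_of_word hT hchain fun j => if h : j < n then v ⟨j, h⟩ else false
    obtain ⟨y, hy⟩ := hshadow (n * T) c fun i _ => hc i
    exact ⟨y, fun j => by simpa [hcw] using hy (j * T) (by nlinarith [j.isLt])⟩
  refine coverEntropy_pos_of_pow_le_netMaxcard (Metric.dist_mem_uniformity hε) hT.ne'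
    one_lt_two fun n => ?_
  simpa using pow_card_le_netMaxcard hε hT hp hword n

end ShadowingEntropy

namespace Homeomorph

variable (f : X ≃ₜ X)

lemma toEquiv_zpow (n : ℤ) : f.toEquiv ^ n = (f ^ n).toEquiv :=
  (map_zpow (⟨⟨toEquiv, rfl⟩, fun _ _ => rfl⟩ : (X ≃ₜ X) →* Equiv.Perm X) f n).symm

lemma zpow_add_one_apply_s8 (n : ℤ) (x : X) : (f ^ (n + 1)) x = f ((f ^ n) x) := by
  rw [add_comm, zpow_one_add, mul_apply]

lemma coe_pow (n : ℕ) : ⇑(f ^ n) = f^[n] := by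
  induction n with
  | zero => rfl
  | succ n ih =>
    funext x
    rw [pow_succ, mul_apply, ih, Function.iterate_succ_apply]

lemma hasChain_zpow {δ : ℝ} (hδ : 0 < δ) (x : X) (i : ℤ) (n : ℕ) :
    HasChain f δ ((f ^ i) x) ((f ^ (i + n)) x) n :=
  ⟨fun t => (f ^ (i + t)) x, by simp, rfl, fun t _ => by
    simpa [← zpow_add_one_apply_s8, add_assoc] using hδ⟩

lemma mapClusterPt_zpow_apply {l : Filter ℤ} (hl : ∀ j : ℤ, Tendsto (j + ·) l l) {u w : X}
    (hw : MapClusterPt w l fun n => (f ^ n) u) (j : ℤ) :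
    MapClusterPt ((f ^ j) w) l fun n => (f ^ n) u := by
  refine MapClusterPt.of_comp (hl j) ?_
  convert hw.continuousAt_comp (f ^ j).continuous.continuousAt using 2
  funext n
  simp [zpow_add]

lemma exists_hasChain_of_mapClusterPt_atTop {u z : X}
    (hz : MapClusterPt z atTop fun n : ℤ => (f ^ n) u) {δ : ℝ} (hδ : 0 < δ) :
    ∃ m, HasChain f δ u z m := by
  obtain ⟨n, hdist, hn⟩ :=
    ((hz.frequently (Metric.ball_mem_nhds z hδ)).and_eventually (eventually_ge_atTop 1)).exists
  obtain ⟨k, rfl⟩ : ∃ k : ℕ, n = k + 1 := ⟨(n - 1).toNat, by omega⟩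
  have hjump : dist (f ((f ^ (0 + (k : ℤ))) u)) z < δ := by
    rwa [zero_add, ← zpow_add_one_apply_s8]
  exact ⟨k + 1, by simpa using (hasChain_zpow f hδ u 0 k).trans (hasChain_one hjump)⟩

lemma exists_hasChain_of_mapClusterPt_atBot {v z : X}
    (hz : MapClusterPt z atBot fun n : ℤ => (f ^ n) v) {δ : ℝ} (hδ : 0 < δ) :
    ∃ m, HasChain f δ z v m := by
  have hfz := mapClusterPt_zpow_apply f
    (fun j => tendsto_atBot_add_const_left atBot j tendsto_id) hz 1
  obtain ⟨n, hdist, hn⟩ :=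
    ((hfz.frequently (Metric.ball_mem_nhds _ hδ)).and_eventually (eventually_le_atBot 0)).exists
  obtain ⟨k, rfl⟩ : ∃ k : ℕ, n = -k := ⟨(-n).toNat, by omega⟩
  have hjump : dist (f z) ((f ^ (-(k : ℤ))) v) < δ := by
    rw [dist_comm]
    simpa using hdist
  exact ⟨1 + k, by simpa using (hasChain_one hjump).trans (hasChain_zpow f hδ v (-k) k)⟩

end Homeomorph

namespace TwoSidedLimitShadowing

open Homeomorph

variable {f : X ≃ₜ X} (h : TwoSidedLimitShadowing f.toEquiv)
include h

lemma exists_tendsto_dist_zpow {x : ℤ → X}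
    (hx : Tendsto (fun i => dist (f (x i)) (x (i + 1))) cofinite (𝓝 0)) :
    ∃ y, Tendsto (fun i => dist ((f ^ i) y) (x i)) cofinite (𝓝 0) := by
  simpa [toEquiv_zpow] using h x hx

lemma exists_tendsto_dist_zpow_glue (p : X) {g : ℕ → X}
    (hg : Tendsto (fun n => dist (f (g n)) (g (n + 1))) atTop (𝓝 0)) :
    ∃ y, Tendsto (fun i : ℤ => dist ((f ^ i) y) (if i < 0 then (f ^ i) p else g i.toNat : X))
      cofinite (𝓝 0) := by
  refine h.exists_tendsto_dist_zpow ?_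
  rw [Int.cofinite_eq, tendsto_sup]
  constructor
  · refine tendsto_const_nhds.congr' ((eventually_lt_atBot (-1)).mono fun i hi => ?_)
    simp [show i < 0 by omega, show i + 1 < 0 by omega, zpow_add_one_apply_s8]
  · rw [← Nat.map_cast_int_atTop, tendsto_map'_iff]
    convert hg using 3 with n
    simp [show ((n : ℤ) + 1).toNat = n + 1 by omega, show ¬(n : ℤ) < 0 by omega,
      show ¬(n : ℤ) + 1 < 0 by omega]

lemma exists_tendsto_dist_iterate {g : ℕ → X}
    (hg : Tendsto (fun n => dist (f (g n)) (g (n + 1))) atTop (𝓝 0)) :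
    ∃ y, Tendsto (fun n : ℕ => dist (f^[n] y) (g n)) atTop (𝓝 0) := by
  obtain ⟨y, hy⟩ := h.exists_tendsto_dist_zpow_glue (g 0) hg
  refine ⟨y, ?_⟩
  convert hy.comp (Nat.cast_injective.tendsto_cofinite.mono_left Nat.cofinite_eq_atTop.ge)
    using 2 with n
  simp [Homeomorph.coe_pow, show ¬(n : ℤ) < 0 by omega]

lemma exists_hasChain_glue (p q : X) {δ : ℝ} (hδ : 0 < δ) :
    ∃ n : ℕ, HasChain f δ ((f ^ (-(n : ℤ) - 2)) p) ((f ^ ((n : ℤ) + 1)) q) (2 * n + 3) := by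
  obtain ⟨y, hy⟩ := h.exists_tendsto_dist_zpow_glue p (g := fun n : ℕ => (f ^ (n : ℤ)) q)
    (tendsto_const_nhds.congr fun n => by rw [Nat.cast_succ, zpow_add_one_apply_s8, dist_self])
  rw [Int.cofinite_eq, tendsto_sup] at hy
  have hbot : Tendsto (fun n : ℕ => -(n : ℤ) - 1) atTop atBot :=
    tendsto_atTop_atBot.2 fun b => ⟨(-b).toNat, fun n hn => by omega⟩
  have htop : Tendsto (fun n : ℕ => (n : ℤ) + 1) atTop atTop :=
    tendsto_atTop_atTop.2 fun b => ⟨b.toNat, fun n hn => by omega⟩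
  obtain ⟨n, hn₁, hn₂⟩ := ((hbot.eventually (hy.1.eventually (gt_mem_nhds hδ))).and
    (htop.eventually (hy.2.eventually (gt_mem_nhds hδ)))).exists
  have hjump₁ : dist (f ((f ^ (-(n : ℤ) - 2)) p)) ((f ^ (-(n : ℤ) - 1)) y) < δ := by
    rw [← zpow_add_one_apply_s8, dist_comm]
    simpa [show -(n : ℤ) - 1 < 0 by omega, show -(n : ℤ) - 2 + 1 = -n - 1 by ring] using hn₁
  have hjump₂ :
      dist (f ((f ^ (-(n : ℤ) - 1 + (2 * n + 1 : ℕ))) y)) ((f ^ ((n : ℤ) + 1)) q) < δ := by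
    rw [show -(n : ℤ) - 1 + (2 * n + 1 : ℕ) = n by push_cast; ring, ← zpow_add_one_apply_s8]
    simpa [show ¬(n : ℤ) + 1 < 0 by omega, show ((n : ℤ) + 1).toNat = n + 1 by omega] using hn₂
  exact ⟨n, (show 1 + (2 * n + 1) + 1 = 2 * n + 3 by ring) ▸
    ((hasChain_one hjump₁).trans (hasChain_zpow f hδ y _ (2 * n + 1))).trans
      (hasChain_one hjump₂)⟩

variable [CompactSpace X]

theorem exists_hasChain (u v : X) {δ : ℝ} (hδ : 0 < δ) : ∃ m, HasChain f δ u v m := by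
  obtain ⟨w, hw⟩ := exists_clusterPt_of_compactSpace (map (fun n : ℤ => (f ^ n) u) atTop)
  obtain ⟨w', hw'⟩ := exists_clusterPt_of_compactSpace (map (fun n : ℤ => (f ^ n) v) atBot)
  obtain ⟨n, hn⟩ := h.exists_hasChain_glue w w' hδ
  obtain ⟨m₁, h₁⟩ := exists_hasChain_of_mapClusterPt_atTop f (mapClusterPt_zpow_apply f
    (fun j => tendsto_atTop_add_const_left atTop j tendsto_id) hw _) hδ
  obtain ⟨m₂, h₂⟩ := exists_hasChain_of_mapClusterPt_atBot f (mapClusterPt_zpow_apply f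
    (fun j => tendsto_atBot_add_const_left atBot j tendsto_id) hw' _) hδ
  exact ⟨_, (h₁.trans hn).trans h₂⟩

theorem isChainMixing : IsChainMixing f := by
  intro δ hδ u v
  obtain ⟨n, hAB⟩ := h.exists_hasChain_glue u (f u) hδ
  set A := (f ^ (-(n : ℤ) - 2)) u
  set B := (f ^ ((n : ℤ) + 1)) (f u)
  -- the phase slip: the orbit of `u` itself goes from `A` to `B` in one more step
  have hAB' : HasChain f δ A B (2 * n + 3 + 1) := by
    have := hasChain_zpow f hδ u (-(n : ℤ) - 2) (2 * n + 4)
    rwa [show -(n : ℤ) - 2 + (2 * n + 4 : ℕ) = n + 1 + 1 by push_cast; ring,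
      zpow_add_one, mul_apply] at this
  obtain ⟨s, hs⟩ := h.exists_hasChain u A hδ
  obtain ⟨r, hr⟩ := h.exists_hasChain B A hδ
  obtain ⟨t, ht⟩ := h.exists_hasChain B v hδ
  set m := 2 * n + 3 + r
  have hloop : HasChain f δ A A m := hAB.trans hr
  have hloop' : HasChain f δ A A (m + 1) := by simpa [m, add_right_comm] using hAB'.trans hr
  filter_upwards [eventually_ge_atTop (s + m * m + (2 * n + 3) + t)] with L hL
  obtain ⟨a, b, hab⟩ := Nat.exists_eq_mul_add_mul_succ (by omega : 0 < m)
    (by omega : m * m ≤ L - (s + (2 * n + 3) + t))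
  have hL' : L = s + (a * m + b * (m + 1)) + (2 * n + 3 + t) := by omega
  rw [hL']
  exact (hs.trans ((hloop.loop_mul a).trans (hloop'.loop_mul b))).trans (hAB.trans ht)

theorem hasShadowing : HasShadowing f := by
  intro ε hε
  by_contra! hfail
  set δ : ℕ → ℝ := fun k => 1 / ((k : ℝ) + 1)
  have hδ : ∀ k, 0 < δ k := fun k => Nat.one_div_pos_of_nat
  choose m c hc hbad using fun k => hfail (δ k) (hδ k)
  have hm : ∀ k, 0 < m k := fun k => Nat.pos_of_ne_zero fun h0 => by
    obtain ⟨i, hi, hlt⟩ := hbad k (c k 0)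
    obtain rfl : i = 0 := by omega
    simp at hlt
    linarith
  choose r hr using fun k => h.exists_hasChain (c k (m k)) (c (k + 1) 0) (hδ k)
  choose d hdc hdL hd using fun k => exists_append_of_hasChain (hc k) (hr k)
  have hL : ∀ k, 0 < m k + r k := fun k => Nat.add_pos_left (hm k) _
  obtain ⟨g, K, hK, hg, hgd⟩ := exists_concat_chains hL (C := d)
    (fun k => by rw [hdL, hdc (k + 1) 0 (Nat.zero_le _)]) hd
  obtain ⟨y, hy⟩ := h.exists_tendsto_dist_iterate (squeeze_zero (fun _ => dist_nonneg)
    (fun i => (hg i).le) (tendsto_one_div_add_atTop_nhds_zero_nat.comp hK))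
  obtain ⟨N, hN⟩ := eventually_atTop.1 (hy.eventually (gt_mem_nhds hε))
  set s := ∑ j ∈ range N, (m j + r j)
  have hsN : N ≤ s :=
    calc N = ∑ _j ∈ range N, 1 := by simp
      _ ≤ s := sum_le_sum fun j _ => hL j
  obtain ⟨i, hi, hlt⟩ := hbad N (f^[s] y)
  have := hN (s + i) (by omega)
  rw [hgd N i (by omega), hdc N i hi, add_comm, Function.iterate_add_apply] at this
  linarith

end TwoSidedLimitShadowing

/-- A homeomorphism of a compact metric space with at least two points which has the
two-sided limit shadowing property has positive topological entropy. -/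
theorem stmt8 [CompactSpace X] (f : X ≃ₜ X) (hX : ∃ a b : X, a ≠ b)
    (h : TwoSidedLimitShadowing f.toEquiv) :
    0 < Dynamics.coverEntropy ⇑f Set.univ := by
  obtain ⟨a, b, hab⟩ := hX
  exact coverEntropy_pos_of_hasShadowing h.hasShadowing h.isChainMixing hab
end

section
/- Let X = {a, b} be a two-point discrete metric space and f : X → X the homeomorphism swapping a and b (e.g. X = Bool and f = not). Then f has the two-sided limit shadowing property with gap 1, but f does not have the two-sided limit shadowing property (i.e. with gap 0). -/
open Filter Topology

variable {X : Type*} [MetricSpace X]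

/-
When distinct points are uniformly far apart, `d(u i, v i) → 0` just means that `u i = v i`
eventually. A two-sided limit pseudo-orbit is then an honest orbit near `-∞`, of some `y₁`, and
near `+∞`, of some `y₂`, and it is shadowed with gap `K` exactly when `f^K y₁ = y₂`. For the swap
of two points `y₂` is always `y₁` or `f y₁`, so gap `1` suffices, while the sequence that follows
the orbit of `a` at negative times and the orbit of `b = f a` afterwards is not shadowed with gap `0`.
-/

namespace Equiv.Perm

variable {Y : Type*} (f : Perm Y) {x : ℤ → Y}

theorem zpow_add_one_apply (n : ℤ) (y : Y) : (f ^ (n + 1)) y = f ((f ^ n) y) := by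
  rw [add_comm, zpow_one_add, mul_apply]

theorem zpow_apply_zpow_neg_apply (n : ℤ) (y : Y) : (f ^ n) ((f ^ (-n)) y) = y := by
  rw [← mul_apply, ← zpow_add, add_neg_cancel, zpow_zero, one_apply]

theorem exists_eventually_zpow_apply_eq_atTop (h : ∀ᶠ i in atTop, f (x i) = x (i + 1)) :
    ∃ y, ∀ᶠ i in atTop, (f ^ i) y = x i := by
  obtain ⟨N, hN⟩ := eventually_atTop.1 h
  refine ⟨(f ^ (-N)) (x N), eventually_atTop.2 ⟨N, Int.leInduction ?_ fun n hn ih => ?_⟩⟩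
  · exact f.zpow_apply_zpow_neg_apply N (x N)
  · rw [zpow_add_one_apply, ih, hN n hn]

theorem exists_eventually_zpow_apply_eq_atBot (h : ∀ᶠ i in atBot, f (x i) = x (i + 1)) :
    ∃ y, ∀ᶠ i in atBot, (f ^ i) y = x i := by
  obtain ⟨N, hN⟩ := eventually_atBot.1 h
  refine ⟨(f ^ (-N)) (x N), eventually_atBot.2 ⟨N, Int.leInductionDown ?_ fun n hn ih => ?_⟩⟩
  · exact f.zpow_apply_zpow_neg_apply N (x N)
  · apply f.injective
    rw [← zpow_add_one_apply, sub_add_cancel, ih, hN (n - 1) (by omega), sub_add_cancel]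

theorem eventually_apply_eq_succ {l : Filter ℤ} (hl : Tendsto (· + 1) l l) {y : Y}
    (h : ∀ᶠ i in l, (f ^ i) y = x i) : ∀ᶠ i in l, f (x i) = x (i + 1) := by
  filter_upwards [h, hl.eventually h] with i hi hi'
  rw [← hi, ← hi', zpow_add_one_apply]

theorem eq_of_eventually_zpow_apply_eq {l : Filter ℤ} [l.NeBot] {y z : Y}
    (hy : ∀ᶠ i in l, (f ^ i) y = x i) (hz : ∀ᶠ i in l, (f ^ i) z = x i) : y = z := by
  obtain ⟨i, hyi, hzi⟩ := (hy.and hz).exists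
  exact (f ^ i).injective (hyi.trans hzi.symm)

end Equiv.Perm

theorem tendsto_dist_nhds_zero_iff_eventually_eq {ι : Type*} {l : Filter ι} {u v : ι → X}
    {ε : ℝ} (hε : 0 < ε) (hsep : Pairwise fun p q : X => ε ≤ dist p q) :
    Tendsto (fun i => dist (u i) (v i)) l (𝓝 0) ↔ ∀ᶠ i in l, u i = v i := by
  refine ⟨fun h => ?_, fun h => tendsto_const_nhds.congr' ?_⟩
  · filter_upwards [h.eventually (gt_mem_nhds hε)] with i hi
    by_contra hne
    exact (hsep hne).not_gt hi
  · filter_upwards [h] with i hi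
    rw [hi, dist_self]

theorem isTwoSidedLimitPseudoOrbit_iff_exists {ε : ℝ} (hε : 0 < ε)
    (hsep : Pairwise fun p q : X => ε ≤ dist p q) {f : Equiv.Perm X} {x : ℤ → X} :
    IsTwoSidedLimitPseudoOrbit f x ↔
      ∃ y₁ y₂, (∀ᶠ i in atBot, (f ^ i) y₁ = x i) ∧ ∀ᶠ i in atTop, (f ^ i) y₂ = x i := by
  rw [IsTwoSidedLimitPseudoOrbit, tendsto_dist_nhds_zero_iff_eventually_eq hε hsep,
    Int.cofinite_eq, eventually_sup]
  constructor
  · rintro ⟨hbot, htop⟩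
    obtain ⟨y₁, h₁⟩ := f.exists_eventually_zpow_apply_eq_atBot hbot
    obtain ⟨y₂, h₂⟩ := f.exists_eventually_zpow_apply_eq_atTop htop
    exact ⟨y₁, y₂, h₁, h₂⟩
  · rintro ⟨y₁, y₂, h₁, h₂⟩
    exact ⟨f.eventually_apply_eq_succ (tendsto_atBot_add_const_right _ 1 tendsto_id) h₁,
      f.eventually_apply_eq_succ (tendsto_atTop_add_const_right _ 1 tendsto_id) h₂⟩

theorem twoSidedLimitShadowedWithGap_iff {ε : ℝ} (hε : 0 < ε)
    (hsep : Pairwise fun p q : X => ε ≤ dist p q) {f : Equiv.Perm X} {x : ℤ → X} {y₁ y₂ : X}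
    (h₁ : ∀ᶠ i in atBot, (f ^ i) y₁ = x i) (h₂ : ∀ᶠ i in atTop, (f ^ i) y₂ = x i) (K : ℤ) :
    TwoSidedLimitShadowedWithGap f x K ↔ (f ^ K) y₁ = y₂ := by
  simp only [TwoSidedLimitShadowedWithGap, tendsto_dist_nhds_zero_iff_eventually_eq hε hsep,
    add_comm K, zpow_add, Equiv.Perm.mul_apply]
  constructor
  · rintro ⟨y, hbot, htop⟩
    rw [← f.eq_of_eventually_zpow_apply_eq hbot h₁]
    exact f.eq_of_eventually_zpow_apply_eq htop h₂
  · rintro rfl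
    exact ⟨y₁, h₁, h₂⟩

/-- The homeomorphism swapping the two points of a two-point (discrete) metric space
has the two-sided limit shadowing property with gap `1`, but does not have the
two-sided limit shadowing property (with gap `0`). -/
theorem stmt10 (a b : X) (hab : a ≠ b) (hX : ∀ x : X, x = a ∨ x = b)
    (f : X ≃ₜ X) (hfa : f a = b) (hfb : f b = a) :
    TwoSidedLimitShadowingGapN f.toEquiv 1 ∧
      ¬ TwoSidedLimitShadowingGapN f.toEquiv 0 := by
  have hε : 0 < dist a b := dist_pos.2 hab
  have hsep : Pairwise fun u v : X => dist a b ≤ dist u v := by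
    intro u v huv
    rcases hX u with rfl | rfl <;> rcases hX v with rfl | rfl <;> simp_all [dist_comm]
  constructor
  · intro x hx
    obtain ⟨y₁, y₂, h₁, h₂⟩ := (isTwoSidedLimitPseudoOrbit_iff_exists hε hsep).1 hx
    have hy : y₂ = y₁ ∨ y₂ = f y₁ := by
      rcases hX y₁ with rfl | rfl <;> rcases hX y₂ with rfl | rfl <;> simp_all
    rcases hy with hy | hy
    · exact ⟨0, by norm_num, (twoSidedLimitShadowedWithGap_iff hε hsep h₁ h₂ 0).2 (by simp [hy])⟩
    · exact ⟨1, by norm_num, (twoSidedLimitShadowedWithGap_iff hε hsep h₁ h₂ 1).2 (by simp [hy])⟩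
  · intro hgap
    let x : ℤ → X := fun i => (f.toEquiv ^ i) (if i < 0 then a else b)
    have h₁ : ∀ᶠ i in atBot, (f.toEquiv ^ i) a = x i :=
      eventually_atBot.2 ⟨-1, fun i hi => by simp [x, show i < 0 by omega]⟩
    have h₂ : ∀ᶠ i in atTop, (f.toEquiv ^ i) b = x i :=
      eventually_atTop.2 ⟨0, fun i hi => by simp [x, show ¬i < 0 by omega]⟩
    obtain ⟨K, hK, hx⟩ :=
      hgap x ((isTwoSidedLimitPseudoOrbit_iff_exists hε hsep).2 ⟨a, b, h₁, h₂⟩)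
    obtain rfl : K = 0 := abs_nonpos_iff.1 hK
    exact hab (by simpa using (twoSidedLimitShadowedWithGap_iff hε hsep h₁ h₂ 0).1 hx)
end

section
/- Let (X,d) be a compact metric space and f : X → X an expansive homeomorphism with the shadowing property and the specification property. Then f has the two-sided limit shadowing property. -/
open Filter Topology

variable {X : Type*} [MetricSpace X]

/-- `f` is expansive, with some expansivity constant `ε > 0`. -/
def Expansive (f : X ≃ X) : Prop :=
  ∃ ε : ℝ, 0 < ε ∧ ∀ x y : X, (∀ n : ℤ, dist ((f ^ n) x) ((f ^ n) y) ≤ ε) → x = y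

/-- The specification property. -/
def SpecificationProperty (f : X ≃ X) : Prop :=
  ∀ ε : ℝ, 0 < ε → ∃ L : ℕ, ∀ m : ℕ, ∀ a b : Fin (m + 1) → ℤ,
    (∀ i, a i ≤ b i) →
    (∀ i : Fin m, b i.castSucc < a i.succ) →
    (∀ i : Fin m, b i.castSucc + (L : ℤ) ≤ a i.succ) →
    ∀ P : ℤ → X,
      (∀ i : Fin (m + 1), ∀ t₁ ∈ Set.Icc (a i) (b i), ∀ t₂ ∈ Set.Icc (a i) (b i),
        (f ^ (t₂ - t₁)) (P t₁) = P t₂) →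
      ∃ y : X, ∀ i : Fin (m + 1), ∀ t ∈ Set.Icc (a i) (b i), dist ((f ^ t) y) (P t) < ε

/-
Shadowing applied to the two tails of a limit pseudo-orbit gives one orbit following it from some
time on and another following it up to some time; specification, together with compactness, glues
them into a single orbit. So for every `c > 0` some orbit `c`-shadows the pseudo-orbit outside a
finite set of times. Two such orbits for `c` below half an expansivity constant `ε` stay `ε`-close
outside a finite set of times, and by compactness expansivity makes them asymptotic in both
directions: an approximate shadow for `ε / 2` is already a limit shadow.
-/

theorem Equiv.Perm.zpow_add_apply {α : Type*} (g : Equiv.Perm α) (m n : ℤ) (x : α) :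
    (g ^ (m + n)) x = (g ^ m) ((g ^ n) x) := by
  rw [zpow_add, Equiv.Perm.mul_apply]

theorem Equiv.Perm.apply_zpow_apply {α : Type*} (g : Equiv.Perm α) (n : ℤ) (x : α) :
    g ((g ^ n) x) = (g ^ (n + 1)) x := by
  rw [add_comm, zpow_add_apply, zpow_one]

theorem Homeomorph.toEquiv_zpow_s11 {Y : Type*} [TopologicalSpace Y] (f : Y ≃ₜ Y) (n : ℤ) :
    (f ^ n).toEquiv = f.toEquiv ^ n :=
  map_zpow ({ toFun := Homeomorph.toEquiv, map_one' := rfl, map_mul' := fun _ _ => rfl } :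
    (Y ≃ₜ Y) →* Equiv.Perm Y) f n

theorem Homeomorph.continuous_toEquiv_zpow {Y : Type*} [TopologicalSpace Y] (f : Y ≃ₜ Y)
    (n : ℤ) : Continuous (f.toEquiv ^ n) := by
  rw [← f.toEquiv_zpow_s11 n]
  exact (f ^ n).continuous

namespace ShadowingPropertyZ

variable {f : X ≃ X} {x : ℤ → X} {ε : ℝ}

theorem exists_eventually_atTop (hsh : ShadowingPropertyZ f)
    (hx : Tendsto (fun i => dist (f (x i)) (x (i + 1))) atTop (𝓝 0)) (hε : 0 < ε) :
    ∃ p : X, ∀ᶠ i in atTop, dist ((f ^ i) p) (x i) < ε := by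
  obtain ⟨δ, hδ, hshadow⟩ := hsh ε hε
  obtain ⟨N, hN⟩ := eventually_atTop.1 (hx.eventually_lt_const hδ)
  let z : ℤ → X := fun i => if N ≤ i then x i else (f ^ (i - N)) (x N)
  have hz_orbit : ∀ i ≤ N, z i = (f ^ (i - N)) (x N) := by
    intro i hi
    rcases hi.lt_or_eq with hi | rfl
    · exact if_neg (not_le.2 hi)
    · simp [z]
  have hz : ∀ i, dist (f (z i)) (z (i + 1)) < δ := by
    intro i
    rcases lt_or_ge i N with hi | hi
    · rw [hz_orbit i hi.le, hz_orbit (i + 1) hi, Equiv.Perm.apply_zpow_apply,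
        sub_add_eq_add_sub, dist_self]
      exact hδ
    · simpa [z, hi, show N ≤ i + 1 by omega] using hN i hi
  obtain ⟨p, hp⟩ := hshadow z hz
  exact ⟨p, eventually_atTop.2 ⟨N, fun i hi => by simpa [z, hi] using hp i⟩⟩

theorem exists_eventually_atBot (hsh : ShadowingPropertyZ f)
    (hx : Tendsto (fun i => dist (f (x i)) (x (i + 1))) atBot (𝓝 0)) (hε : 0 < ε) :
    ∃ q : X, ∀ᶠ i in atBot, dist ((f ^ i) q) (x i) < ε := by
  obtain ⟨δ, hδ, hshadow⟩ := hsh ε hε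
  obtain ⟨N, hN⟩ := eventually_atBot.1 (hx.eventually_lt_const hδ)
  let z : ℤ → X := fun i => if i ≤ N then x i else (f ^ (i - N)) (x N)
  have hz_orbit : ∀ i, N ≤ i → z i = (f ^ (i - N)) (x N) := by
    intro i hi
    rcases hi.lt_or_eq with hi | rfl
    · exact if_neg (not_le.2 hi)
    · simp [z]
  have hz : ∀ i, dist (f (z i)) (z (i + 1)) < δ := by
    intro i
    rcases lt_or_ge i N with hi | hi
    · simpa [z, hi.le, show i + 1 ≤ N by omega] using hN i hi.le
    · rw [hz_orbit i hi, hz_orbit (i + 1) (by omega), Equiv.Perm.apply_zpow_apply,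
        sub_add_eq_add_sub, dist_self]
      exact hδ
  obtain ⟨q, hq⟩ := hshadow z hz
  exact ⟨q, eventually_atBot.2 ⟨N, fun i hi => by simpa [z, hi] using hq i⟩⟩

end ShadowingPropertyZ

namespace SpecificationProperty

theorem exists_dist_lt_on_two_segments {f : X ≃ X} (hsp : SpecificationProperty f) {ε : ℝ}
    (hε : 0 < ε) :
    ∃ K : ℤ, ∀ (p q : X) (n : ℕ), ∃ y : X,
      (∀ t ∈ Set.Icc (0 : ℤ) n, dist ((f ^ t) y) ((f ^ t) p) < ε) ∧
      ∀ t ∈ Set.Icc (-n - K) (-K), dist ((f ^ t) y) ((f ^ t) q) < ε := by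
  obtain ⟨L, hL⟩ := hsp ε hε
  -- not `L`: the segments must also be disjoint, and `L` may be `0`
  refine ⟨L + 1, fun p q n => ?_⟩
  let P : ℤ → X := fun t => if t < 0 then (f ^ t) q else (f ^ t) p
  have hP : ∀ (z : X) (t₁ t₂ : ℤ), (f ^ (t₂ - t₁)) ((f ^ t₁) z) = (f ^ t₂) z := fun z t₁ t₂ => by
    rw [← Equiv.Perm.zpow_add_apply, sub_add_cancel]
  let a : Fin 2 → ℤ := ![-n - (L + 1), 0]
  let b : Fin 2 → ℤ := ![-(L + 1), n]
  have hPorbit : ∀ (i : Fin 2), ∀ t₁ ∈ Set.Icc (a i) (b i),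
      ∀ t₂ ∈ Set.Icc (a i) (b i), (f ^ (t₂ - t₁)) (P t₁) = P t₂ := by
    intro i t₁ h₁ t₂ h₂
    have hsign : t₁ < 0 ↔ t₂ < 0 := by
      fin_cases i <;> simp [a, b] at h₁ h₂ <;> omega
    simp only [P]
    split_ifs <;> first | exact hP _ _ _ | tauto
  obtain ⟨y, hy⟩ := hL 1 a b (by simp [a, b, Fin.forall_fin_two]; omega)
    (by simp [a, b]; omega) (by simp [a, b]) P hPorbit
  refine ⟨y, fun t ht => ?_, fun t ht => ?_⟩
  · simpa [P, not_lt.2 ht.1] using hy 1 t (by simpa [a, b] using ht)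
  · simpa [P, show t < 0 by linarith [ht.2]] using hy 0 t (by simpa [a, b] using ht)

theorem exists_eventually_dist_le [CompactSpace X] {f : X ≃ₜ X}
    (hsp : SpecificationProperty f.toEquiv) {ε : ℝ} (hε : 0 < ε) (p q : X) :
    ∃ y : X, (∀ᶠ t : ℤ in atBot, dist ((f.toEquiv ^ t) y) ((f.toEquiv ^ t) q) ≤ ε) ∧
      ∀ᶠ t : ℤ in atTop, dist ((f.toEquiv ^ t) y) ((f.toEquiv ^ t) p) ≤ ε := by
  obtain ⟨K, hK⟩ := hsp.exists_dist_lt_on_two_segments hε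
  choose y hyp hyq using hK p q
  obtain ⟨z, -, hz⟩ := isCompact_univ.exists_mapClusterPt (f := atTop) (u := y) (by simp)
  have hclosed (t : ℤ) (w : X) :
      IsClosed {v : X | dist ((f.toEquiv ^ t) v) ((f.toEquiv ^ t) w) ≤ ε} :=
    isClosed_le ((f.continuous_toEquiv_zpow t).dist continuous_const) continuous_const
  refine ⟨z, eventually_atBot.2 ⟨-K, fun t ht => (hclosed t q).mem_of_mapClusterPt hz ?_⟩,
    eventually_atTop.2 ⟨0, fun t ht => (hclosed t p).mem_of_mapClusterPt hz ?_⟩⟩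
  · filter_upwards [eventually_ge_atTop (-t - K).toNat] with n hn
    exact (hyq n t ⟨by omega, ht⟩).le
  · filter_upwards [eventually_ge_atTop t.toNat] with n hn
    exact (hyp n t ⟨ht, by omega⟩).le

end SpecificationProperty

section Expansive

variable [CompactSpace X] (f : X ≃ₜ X) {ε : ℝ}

theorem exists_dist_lt_of_forall_natAbs_le
    (hexp : ∀ x y : X, (∀ n : ℤ, dist ((f.toEquiv ^ n) x) ((f.toEquiv ^ n) y) ≤ ε) → x = y)
    {c : ℝ} (hc : 0 < c) :
    ∃ N : ℕ, ∀ a b : X, (∀ j : ℤ, j.natAbs ≤ N →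
      dist ((f.toEquiv ^ j) a) ((f.toEquiv ^ j) b) ≤ ε) → dist a b < c := by
  by_contra! h
  choose a b hnear hfar using h
  obtain ⟨z, -, hz⟩ :=
    isCompact_univ.exists_mapClusterPt (f := atTop) (u := fun N => (a N, b N)) (by simp)
  have hzfar : c ≤ dist z.1 z.2 :=
    (isClosed_le continuous_const (continuous_fst.dist continuous_snd)).mem_of_mapClusterPt hz
      (.of_forall hfar)
  have hznear (j : ℤ) : dist ((f.toEquiv ^ j) z.1) ((f.toEquiv ^ j) z.2) ≤ ε := by
    have hj := f.continuous_toEquiv_zpow j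
    refine (isClosed_le ((hj.comp continuous_fst).dist (hj.comp continuous_snd))
      continuous_const).mem_of_mapClusterPt hz ?_
    filter_upwards [eventually_ge_atTop j.natAbs] with N hN
    exact hnear N j hN
  rw [hexp _ _ hznear, dist_self] at hzfar
  exact hc.not_ge hzfar

theorem tendsto_dist_zpow_cofinite
    (hexp : ∀ x y : X, (∀ n : ℤ, dist ((f.toEquiv ^ n) x) ((f.toEquiv ^ n) y) ≤ ε) → x = y)
    {a b : X} (hab : ∀ᶠ k : ℤ in cofinite, dist ((f.toEquiv ^ k) a) ((f.toEquiv ^ k) b) ≤ ε) :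
    Tendsto (fun k : ℤ => dist ((f.toEquiv ^ k) a) ((f.toEquiv ^ k) b)) cofinite (𝓝 0) := by
  refine tendsto_order.2 ⟨fun c hc => .of_forall fun k => hc.trans_le dist_nonneg, fun c hc => ?_⟩
  obtain ⟨N, hN⟩ := exists_dist_lt_of_forall_natAbs_le f hexp hc
  have hwindow : ∀ᶠ k : ℤ in cofinite, ∀ j ∈ Finset.Icc (-N : ℤ) N,
      dist ((f.toEquiv ^ (j + k)) a) ((f.toEquiv ^ (j + k)) b) ≤ ε :=
    (eventually_all_finset _).2 fun j _ => (add_right_injective j).tendsto_cofinite.eventually hab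
  filter_upwards [hwindow] with k hk
  refine hN _ _ fun j hj => ?_
  simpa only [Equiv.Perm.zpow_add_apply] using hk j (Finset.mem_Icc.2 (by omega))

end Expansive

theorem exists_eventually_cofinite_dist_lt [CompactSpace X] {f : X ≃ₜ X}
    (hsh : ShadowingPropertyZ f.toEquiv) (hsp : SpecificationProperty f.toEquiv) {x : ℤ → X}
    (hx : IsTwoSidedLimitPseudoOrbit f.toEquiv x) {c : ℝ} (hc : 0 < c) :
    ∃ y : X, ∀ᶠ i in cofinite, dist ((f.toEquiv ^ i) y) (x i) < c := by
  rw [IsTwoSidedLimitPseudoOrbit, Int.cofinite_eq, tendsto_sup] at hx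
  obtain ⟨q, hq⟩ := hsh.exists_eventually_atBot hx.1 (half_pos hc)
  obtain ⟨p, hp⟩ := hsh.exists_eventually_atTop hx.2 (half_pos hc)
  obtain ⟨y, hyq, hyp⟩ := hsp.exists_eventually_dist_le (half_pos hc) p q
  refine ⟨y, Int.cofinite_eq ▸ eventually_sup.2 ⟨?_, ?_⟩⟩
  · filter_upwards [hyq, hq] with i h h'
    linarith [dist_triangle ((f.toEquiv ^ i) y) ((f.toEquiv ^ i) q) (x i)]
  · filter_upwards [hyp, hp] with i h h'
    linarith [dist_triangle ((f.toEquiv ^ i) y) ((f.toEquiv ^ i) p) (x i)]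

/-- An expansive homeomorphism of a compact metric space with the shadowing and
specification properties has the two-sided limit shadowing property. -/
theorem stmt11 [CompactSpace X] (f : X ≃ₜ X) (he : Expansive f.toEquiv)
    (hsh : ShadowingPropertyZ f.toEquiv) (hsp : SpecificationProperty f.toEquiv) :
    TwoSidedLimitShadowing f.toEquiv := by
  obtain ⟨ε, hε, hexp⟩ := he
  intro x hx
  obtain ⟨y, hy⟩ := exists_eventually_cofinite_dist_lt hsh hsp hx (half_pos hε)
  refine ⟨y, tendsto_order.2 ⟨fun c hc => .of_forall fun i => hc.trans_le dist_nonneg,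
    fun c hc => ?_⟩⟩
  obtain ⟨y', hy'⟩ :=
    exists_eventually_cofinite_dist_lt hsh hsp hx (lt_min (half_pos hc) (half_pos hε))
  have hclose : ∀ᶠ i : ℤ in cofinite,
      dist ((f.toEquiv ^ i) y) ((f.toEquiv ^ i) y') ≤ ε := by
    filter_upwards [hy, hy'] with i h h'
    linarith [min_le_right (c / 2) (ε / 2), dist_triangle_right ((f.toEquiv ^ i) y)
      ((f.toEquiv ^ i) y') (x i)]
  filter_upwards [(tendsto_dist_zpow_cofinite f hexp hclose).eventually_lt_const (half_pos hc), hy']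
    with i h h'
  linarith [min_le_left (c / 2) (ε / 2), dist_triangle ((f.toEquiv ^ i) y)
    ((f.toEquiv ^ i) y') (x i)]
end

section
/- Let (X,d) be a compact metric space and f : X → X an expansive homeomorphism. Then f is topologically mixing and has the shadowing property if and only if f has the two-sided limit shadowing property. -/
/-!
(⇒) Given a two-sided limit pseudo-orbit `x` and `δ > 0`, mixing yields a true orbit segment
leaving a point near `x a` (with `a` far in the past) and arriving near `x b` (with `b` far in
the future); splicing it into `x` gives a `δ`-pseudo-orbit that agrees with `x` off a finite set.
Shadowing it shows that for every `ε > 0` some point `ε`-shadows `x` off a finite set. For `ε` at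
most half an expansivity constant `c`, two such points stay `c`-close off a finite set, so by
expansivity (made uniform by compactness) they are asymptotic in both time directions; hence one
point shadows `x` with error tending to zero.

(⇐) Applying two-sided limit shadowing to the backward orbit of an `ω`-limit point of `u` followed
by the forward orbit of an `α`-limit point of `v` joins `u` to `v` by `δ`-chains of two consecutive
lengths, hence (Frobenius) of all large lengths; shadowing these chains gives mixing. If shadowing
failed for some `ε`, finer and finer `δ`-pseudo-orbits that are not `ε`-shadowed on a finite window
could be strung together by such chains into one two-sided limit pseudo-orbit, which then would
not be asymptotically shadowed.
-/

open Filter Topology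

variable {X : Type*} [MetricSpace X]

/-- `g` is topologically mixing. -/
def TopologicallyMixing (g : X → X) : Prop :=
  ∀ U V : Set X, IsOpen U → IsOpen V → U.Nonempty → V.Nonempty →
    ∃ N : ℕ, ∀ n : ℕ, N ≤ n → (g^[n] '' U ∩ V).Nonempty

namespace LimitShadowing

open Equiv Metric

lemma zpow_add_apply {α : Type*} (f : Perm α) (m n : ℤ) (a : α) :
    (f ^ (m + n)) a = (f ^ m) ((f ^ n) a) := by
  rw [zpow_add, Perm.mul_apply]

lemma zpow_add_one_apply {α : Type*} (f : Perm α) (n : ℤ) (a : α) :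
    (f ^ (n + 1)) a = f ((f ^ n) a) := by
  rw [add_comm, zpow_add_apply, zpow_one]

lemma continuous_zpow {α : Type*} [TopologicalSpace α] {f : Perm α} (hf : Continuous f)
    (hf' : Continuous f.symm) (n : ℤ) : Continuous ⇑(f ^ n) := by
  induction n using Int.induction_on with
  | zero => exact continuous_id
  | succ n ih => rw [zpow_add_one, Perm.coe_mul]; exact ih.comp hf
  | pred n ih => rw [zpow_sub_one, Perm.coe_mul, Perm.inv_def]; exact ih.comp hf'

def glue {α : Type*} (k : ℤ) (x y : ℤ → α) : ℤ → α := fun i => if i < k then x i else y i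

lemma glue_apply_of_le {α : Type*} {k i : ℤ} {x y : ℤ → α} (h : x k = y k) (hi : i ≤ k) :
    glue k x y i = x i := by
  rcases hi.lt_or_eq with hi | rfl
  · simp [glue, hi]
  · simp [glue, h]

lemma glue_apply_of_ge {α : Type*} {k i : ℤ} (x y : ℤ → α) (hi : k ≤ i) : glue k x y i = y i :=
  if_neg hi.not_gt

lemma existsUnique_mem_Ico_of_strictMono {t : ℕ → ℕ} (ht : StrictMono t) {i : ℕ} (hi : t 0 ≤ i) :
    ∃! k, i ∈ Set.Ico (t k) (t (k + 1)) := by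
  obtain ⟨k, hk⟩ := ht.exists_between_of_tendsto_atTop ht.tendsto_atTop (x := i + 1) (by omega)
  refine ⟨k, ⟨by omega, by omega⟩, fun k' ⟨hk₁, hk₂⟩ => le_antisymm ?_ ?_⟩
  · by_contra h
    have := ht.monotone (show k + 1 ≤ k' by omega)
    omega
  · by_contra h
    have := ht.monotone (show k' + 1 ≤ k by omega)
    omega

section PseudoOrbits

variable (f : Perm X)

def jump (x : ℤ → X) (i : ℤ) : ℝ := dist (f (x i)) (x (i + 1))

def IsPseudoOrbit (δ : ℝ) (x : ℤ → X) : Prop := ∀ i, jump f x i < δ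

/-- A `δ`-chain of length `n` from `u` to `v`, taken as part of a two-sided `δ`-pseudo-orbit so
that shadowing applies to it directly. -/
def HasChain (δ : ℝ) (n : ℕ) (u v : X) : Prop :=
  ∃ c : ℤ → X, IsPseudoOrbit f δ c ∧ c 0 = u ∧ c n = v

variable {f}

lemma jump_zpow (a : X) (i : ℤ) : jump f (fun j => (f ^ j) a) i = 0 := by
  rw [jump, zpow_add_one_apply, dist_self]

lemma isPseudoOrbit_zpow {δ : ℝ} (hδ : 0 < δ) (a : X) : IsPseudoOrbit f δ (fun j => (f ^ j) a) :=
  fun i => (jump_zpow a i).trans_lt hδ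

lemma jump_glue_of_lt {k i : ℤ} (x y : ℤ → X) (h : i + 1 < k) :
    jump f (glue k x y) i = jump f x i := by
  simp only [jump, glue, if_pos h, if_pos (by omega : i < k)]

lemma jump_glue_of_le {k i : ℤ} (x y : ℤ → X) (h : k ≤ i) :
    jump f (glue k x y) i = jump f y i := by
  simp only [jump, glue, if_neg (by omega : ¬i < k), if_neg (by omega : ¬i + 1 < k)]

lemma jump_glue_sub_one (k : ℤ) (x y : ℤ → X) :
    jump f (glue k x y) (k - 1) = dist (f (x (k - 1))) (y k) := by
  simp [jump, glue]

lemma isPseudoOrbit_glue {δ : ℝ} {k : ℤ} {x y : ℤ → X} (hx : ∀ i, i + 1 < k → jump f x i < δ)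
    (hk : dist (f (x (k - 1))) (y k) < δ) (hy : ∀ i, k ≤ i → jump f y i < δ) :
    IsPseudoOrbit f δ (glue k x y) := by
  intro i
  rcases lt_trichotomy (i + 1) k with h | h | h
  · rw [jump_glue_of_lt x y h]; exact hx i h
  · obtain rfl : i = k - 1 := by omega
    rwa [jump_glue_sub_one]
  · rw [jump_glue_of_le x y (by omega)]; exact hy i (by omega)

namespace IsPseudoOrbit

variable {δ : ℝ} {x y : ℤ → X}

lemma glue (hx : IsPseudoOrbit f δ x) (hy : IsPseudoOrbit f δ y) {k : ℤ} (h : x k = y k) :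
    IsPseudoOrbit f δ (glue k x y) :=
  isPseudoOrbit_glue (fun i _ => hx i) (by simpa [jump, ← h] using hx (k - 1)) (fun i _ => hy i)

lemma comp_sub (hx : IsPseudoOrbit f δ x) (s : ℤ) : IsPseudoOrbit f δ (fun i => x (i - s)) := by
  intro i
  simpa [jump, sub_add_eq_add_sub] using hx (i - s)

end IsPseudoOrbit

lemma hasChain_zero {δ : ℝ} (hδ : 0 < δ) (u : X) : HasChain f δ 0 u u :=
  ⟨fun j => (f ^ j) u, isPseudoOrbit_zpow hδ u, rfl, rfl⟩

/-- The chain follows the orbit of `u` for `k` steps, then jumps onto the orbit of `v`. -/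
lemma hasChain_of_dist_lt {δ : ℝ} {k n : ℕ} {u v : X} (hk : 0 < k) (hkn : k ≤ n)
    (h : dist ((f ^ (k : ℤ)) u) ((f ^ ((k : ℤ) - n)) v) < δ) : HasChain f δ n u v := by
  have hδ : 0 < δ := dist_nonneg.trans_lt h
  refine ⟨glue k (fun j => (f ^ j) u) (fun j => (f ^ j) ((f ^ (-(n : ℤ))) v)),
    isPseudoOrbit_glue (fun i _ => isPseudoOrbit_zpow hδ u i) ?_
      (fun i _ => isPseudoOrbit_zpow hδ _ i), by simp [glue, hk], ?_⟩
  · rwa [← zpow_add_one_apply, sub_add_cancel, ← zpow_add_apply, ← sub_eq_add_neg]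
  · simp [glue, hkn]

lemma hasChain_of_dist_zpow_lt {δ : ℝ} {n : ℕ} {u v : X} (hn : 0 < n)
    (h : dist ((f ^ (n : ℤ)) u) v < δ) : HasChain f δ n u v :=
  hasChain_of_dist_lt hn le_rfl (by simpa using h)

lemma hasChain_of_dist_lt_zpow {δ : ℝ} {n : ℕ} {u v : X} (hn : 0 < n)
    (h : dist (f u) ((f ^ (1 - (n : ℤ))) v) < δ) : HasChain f δ n u v :=
  hasChain_of_dist_lt one_pos hn (by simpa using h)

lemma HasChain.trans {δ : ℝ} {m n : ℕ} {u v w : X} (h₁ : HasChain f δ m u v)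
    (h₂ : HasChain f δ n v w) : HasChain f δ (m + n) u w := by
  obtain ⟨c, hc, hc0, hcm⟩ := h₁
  obtain ⟨d, hd, hd0, hdn⟩ := h₂
  have hglue : c m = d (m - m) := by simp [hcm, hd0]
  refine ⟨glue m c (fun i => d (i - m)), hc.glue (hd.comp_sub m) hglue, ?_, ?_⟩
  · rw [glue_apply_of_le hglue (by positivity), hc0]
  · rw [glue_apply_of_ge _ _ (by push_cast; omega)]
    simp [hdn]

lemma mapClusterPt_zpow (hf : Continuous f) (hf' : Continuous f.symm) {l : Filter ℤ} {k : ℤ}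
    (hl : Tendsto (k + ·) l l) {u w : X} (hw : MapClusterPt w l (fun i => (f ^ i) u)) :
    MapClusterPt ((f ^ k) w) l (fun i => (f ^ i) u) := by
  refine MapClusterPt.of_comp hl ?_
  simpa only [Function.comp_def, zpow_add_apply]
    using hw.continuousAt_comp (continuous_zpow hf hf' k).continuousAt

lemma exists_hasChain_of_mapClusterPt_atTop {u w : X}
    (hw : MapClusterPt w atTop (fun i : ℤ => (f ^ i) u)) {δ : ℝ} (hδ : 0 < δ) :
    ∃ n, HasChain f δ n u w := by
  obtain ⟨i, hi, hiw⟩ := frequently_atTop.1 (hw.frequently (ball_mem_nhds w hδ)) 1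
  refine ⟨i.toNat, hasChain_of_dist_zpow_lt (by omega) ?_⟩
  rwa [Int.toNat_of_nonneg (by omega)]

lemma _root_.TwoSidedLimitShadowing.eventually_hasChain_zpow (hT : TwoSidedLimitShadowing f)
    {δ : ℝ} (hδ : 0 < δ) (a b : X) :
    ∀ᶠ K : ℕ in atTop, HasChain f δ (1 + 2 * K) ((f ^ (-(K : ℤ))) a) ((f ^ ((K : ℤ) + 1)) b) := by
  set x := glue 1 (fun i => (f ^ i) a) (fun i => (f ^ i) b)
  have hx : IsTwoSidedLimitPseudoOrbit f x := by
    refine tendsto_const_nhds.congr' ((eventually_cofinite_ne 0).mono fun i hi => ?_)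
    rcases lt_or_gt_of_ne hi with hi | hi
    · exact (jump_glue_of_lt _ _ (by omega)).trans (jump_zpow a i) |>.symm
    · exact (jump_glue_of_le _ _ (by omega)).trans (jump_zpow b i) |>.symm
  obtain ⟨y, hy⟩ := hT x hx
  rw [Int.cofinite_eq, tendsto_sup] at hy
  have hbot : Tendsto (fun K : ℕ => 1 - (K : ℤ)) atTop atBot :=
    tendsto_atBot_add_const_left _ 1 (tendsto_neg_atTop_atBot.comp tendsto_natCast_atTop_atTop)
  have htop : Tendsto (fun K : ℕ => (K : ℤ) + 1) atTop atTop :=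
    tendsto_atTop_add_const_right _ 1 tendsto_natCast_atTop_atTop
  filter_upwards [(hy.1.comp hbot).eventually (gt_mem_nhds hδ),
    (hy.2.comp htop).eventually (gt_mem_nhds hδ), eventually_ge_atTop 1] with K hKa hKb hK
  simp only [Function.comp_apply, x, glue, show 1 - (K : ℤ) < 1 by omega,
    show ¬(K : ℤ) + 1 < 1 by omega, if_true, if_false] at hKa hKb
  refine (hasChain_of_dist_zpow_lt (v := (f ^ (1 - (K : ℤ))) y) one_pos ?_).trans
    (hasChain_of_dist_zpow_lt (by omega) ?_)
  · rwa [Nat.cast_one, ← zpow_add_apply, ← sub_eq_add_neg, dist_comm]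
  · rwa [← zpow_add_apply, show ((2 * K : ℕ) : ℤ) + (1 - K) = K + 1 by push_cast; ring]

lemma exists_isTwoSidedLimitPseudoOrbit_concat {δ : ℕ → ℝ} (hδ : Tendsto δ atTop (𝓝 0))
    {n : ℕ → ℕ} (hn : ∀ k, 0 < n k) {B : ℕ → ℤ → X} (hB : ∀ k, IsPseudoOrbit f (δ k) (B k))
    {p : X} (hB0 : ∀ k, B k 0 = p) (hBn : ∀ k, B k (n k) = p) :
    ∃ x : ℤ → X, ∃ t : ℕ → ℕ, IsTwoSidedLimitPseudoOrbit f x ∧ Tendsto t atTop atTop ∧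
      ∀ k (i : ℤ), 0 ≤ i → i ≤ n k → x (t k + i) = B k i := by
  set t : ℕ → ℕ := fun k => ∑ j ∈ Finset.range k, n j
  have ht_succ (k : ℕ) : t (k + 1) = t k + n k := Finset.sum_range_succ n k
  have ht : StrictMono t := strictMono_nat_of_lt_succ fun k => by rw [ht_succ]; have := hn k; omega
  choose blk hblk hblk_unique using fun i : ℕ =>
    existsUnique_mem_Ico_of_strictMono ht (i := i) (by simp [t])
  set x : ℤ → X := fun j => if j < 0 then (f ^ j) p else B (blk j.toNat) (j - t (blk j.toNat))
  have hx_lt (k : ℕ) (i : ℤ) (hi0 : 0 ≤ i) (hin : i < n k) : x (t k + i) = B k i := by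
    have hk : blk (t k + i.toNat) = k :=
      (hblk_unique _ k ⟨by omega, by rw [ht_succ]; omega⟩).symm
    simp only [x, show ¬((t k : ℤ) + i < 0) by omega, if_false,
      show ((t k : ℤ) + i).toNat = t k + i.toNat by omega, hk]
    ring_nf
  have hx_le (k : ℕ) (i : ℤ) (hi0 : 0 ≤ i) (hin : i ≤ n k) : x (t k + i) = B k i := by
    rcases hin.lt_or_eq with hin | rfl
    · exact hx_lt k i hi0 hin
    · simpa [ht_succ, hB0, hBn, add_assoc] using hx_lt (k + 1) 0 le_rfl (by simpa using hn (k + 1))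
  have hx_neg (j : ℤ) (hj : j ≤ 0) : x j = (f ^ j) p := by
    rcases hj.lt_or_eq with hj | rfl
    · simp [x, hj]
    · simpa [t, hB0] using hx_lt 0 0 le_rfl (by simpa using hn 0)
  have hjump (k : ℕ) (i : ℤ) (hi0 : 0 ≤ i) (hin : i < n k) :
      jump f x (t k + i) = jump f (B k) i := by
    simp only [jump, hx_lt k i hi0 hin, add_assoc, hx_le k (i + 1) (by omega) (by omega)]
  refine ⟨x, t, tendsto_order.2 ⟨fun a ha => .of_forall fun j => ha.trans_le dist_nonneg,
    fun ε hε => ?_⟩, ht.tendsto_atTop, hx_le⟩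
  obtain ⟨K, hK⟩ := eventually_atTop.1 (hδ.eventually (gt_mem_nhds hε))
  filter_upwards [(Set.finite_Ico (0 : ℤ) (t K)).eventually_cofinite_notMem] with j hj
  rcases lt_or_ge j 0 with hj0 | hj0
  · simpa [jump, hx_neg j hj0.le, hx_neg (j + 1) hj0, zpow_add_one_apply] using hε
  · have hjK : t K ≤ j := by simpa [hj0] using hj
    obtain ⟨hk₁, hk₂⟩ := hblk j.toNat
    have hKk : K ≤ blk j.toNat := by
      by_contra h
      have := ht.monotone (show blk j.toNat + 1 ≤ K by omega)
      omega
    have := hjump (blk j.toNat) (j - t (blk j.toNat)) (by omega) (by rw [ht_succ] at hk₂; omega)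
    rw [add_sub_cancel] at this
    exact (this.trans_lt (hB _ _)).trans (hK _ hKk)

end PseudoOrbits

section Compact

variable [CompactSpace X] {f : Perm X}

lemma exists_finset_dist_lt_of_expansive (hf : Continuous f) (hf' : Continuous f.symm) {c : ℝ}
    (hexp : ∀ x y : X, (∀ n : ℤ, dist ((f ^ n) x) ((f ^ n) y) ≤ c) → x = y) {ε : ℝ} (hε : 0 < ε) :
    ∃ u : Finset ℤ, ∀ x y : X, (∀ n ∈ u, dist ((f ^ n) x) ((f ^ n) y) ≤ c) → dist x y < ε := by
  have hs : IsCompact {p : X × X | ε ≤ dist p.1 p.2} :=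
    (isClosed_le continuous_const continuous_dist).isCompact
  have hclosed (n : ℤ) : IsClosed {p : X × X | dist ((f ^ n) p.1) ((f ^ n) p.2) ≤ c} :=
    isClosed_le (((continuous_zpow hf hf' n).comp continuous_fst).dist
      ((continuous_zpow hf hf' n).comp continuous_snd)) continuous_const
  obtain ⟨u, hu⟩ := hs.elim_finite_subfamily_closed _ hclosed <| by
    refine Set.eq_empty_of_forall_notMem fun p ⟨hp, hpc⟩ => ?_
    have := hexp p.1 p.2 (by simpa using hpc)
    change ε ≤ dist p.1 p.2 at hp
    rw [this, dist_self] at hp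
    linarith
  refine ⟨u, fun x y h => ?_⟩
  by_contra! hxy
  exact Set.eq_empty_iff_forall_notMem.1 hu (x, y) ⟨hxy, by simpa using h⟩

lemma exists_finset_of_not_shadowed (hf : Continuous f) (hf' : Continuous f.symm) {x : ℤ → X}
    {ε : ℝ} (h : ∀ y, ∃ i, ε < dist ((f ^ i) y) (x i)) :
    ∃ u : Finset ℤ, ∀ z, ∃ i ∈ u, ε < dist ((f ^ i) z) (x i) := by
  by_contra! hu
  obtain ⟨y, -, hy⟩ := isCompact_univ.inter_iInter_nonempty
    (fun i => {z | dist ((f ^ i) z) (x i) ≤ ε})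
    (fun i => isClosed_le ((continuous_zpow hf hf' i).dist continuous_const) continuous_const)
    (fun u => by obtain ⟨z, hz⟩ := hu u; exact ⟨z, trivial, by simpa using hz⟩)
  obtain ⟨i, hi⟩ := h y
  exact (Set.mem_iInter.1 hy i).not_gt hi

lemma tendsto_dist_zpow_of_eventually_le (hf : Continuous f) (hf' : Continuous f.symm) {c : ℝ}
    (hexp : ∀ x y : X, (∀ n : ℤ, dist ((f ^ n) x) ((f ^ n) y) ≤ c) → x = y) {y w : X}
    (h : ∀ᶠ i : ℤ in cofinite, dist ((f ^ i) y) ((f ^ i) w) ≤ c) :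
    Tendsto (fun i : ℤ => dist ((f ^ i) y) ((f ^ i) w)) cofinite (𝓝 0) := by
  refine tendsto_order.2 ⟨fun a ha => .of_forall fun i => ha.trans_le dist_nonneg, fun ε hε => ?_⟩
  obtain ⟨u, hu⟩ := exists_finset_dist_lt_of_expansive hf hf' hexp hε
  have hshift (n : ℤ) :
      ∀ᶠ i : ℤ in cofinite, dist ((f ^ n) ((f ^ i) y)) ((f ^ n) ((f ^ i) w)) ≤ c := by
    simpa only [zpow_add_apply] using (add_right_injective n).tendsto_cofinite.eventually h
  filter_upwards [(eventually_all_finset u).2 fun n _ => hshift n] with i hi using hu _ _ hi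

/-- The time `b` is taken where `x` returns near a cluster point `q` of its future, so that the
mixing time for the balls around `x a` and `q` does not depend on `b`. -/
lemma exists_isPseudoOrbit_eventuallyEq (hmix : TopologicallyMixing f) {x : ℤ → X}
    (hx : IsTwoSidedLimitPseudoOrbit f x) {δ : ℝ} (hδ : 0 < δ) :
    ∃ z, IsPseudoOrbit f δ z ∧ z =ᶠ[cofinite] x := by
  have hδ2 := half_pos hδ
  have hsmall : ∀ᶠ i in cofinite, jump f x i < δ / 2 := hx.eventually (gt_mem_nhds hδ2)
  rw [Int.cofinite_eq, eventually_sup, eventually_atBot, eventually_atTop] at hsmall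
  obtain ⟨⟨a, ha⟩, ⟨b₀, hb₀⟩⟩ := hsmall
  obtain ⟨q, -, hq⟩ := isCompact_univ.exists_mapClusterPt (f := atTop) (u := x) (by simp)
  obtain ⟨N, hN⟩ := hmix (ball (x a) (δ / 2)) (ball q (δ / 2)) isOpen_ball isOpen_ball
    ⟨_, mem_ball_self hδ2⟩ ⟨_, mem_ball_self hδ2⟩
  obtain ⟨b, hb, hxb⟩ := (hq.frequently (ball_mem_nhds q hδ2)).forall_exists_of_atTop
    (max b₀ (a + N + 1))
  obtain ⟨_, ⟨p, hp, rfl⟩, hpq⟩ := hN (b - a).toNat (by omega)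
  have hpb : dist ((f ^ (b - a)) p) (x b) < δ := by
    have : (f ^ (b - a)) p = f^[(b - a).toNat] p := by
      rw [← Perm.coe_pow, ← zpow_natCast, Int.toNat_of_nonneg (by omega)]
    rw [this]
    linarith [dist_triangle_right (f^[(b - a).toNat] p) (x b) q, mem_ball.1 hpq, mem_ball.1 hxb]
  set o : ℤ → X := fun i => (f ^ i) ((f ^ (-a)) p)
  have hinner : IsPseudoOrbit f δ (glue a x o) := by
    refine isPseudoOrbit_glue (fun i hi => (ha i (by omega)).trans (half_lt_self hδ)) ?_
      (fun i _ => isPseudoOrbit_zpow hδ _ i)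
    have hjump : dist (f (x (a - 1))) (x a) < δ / 2 := by simpa [jump] using ha (a - 1) (by omega)
    simp only [o, ← zpow_add_apply, add_neg_cancel, zpow_zero, Perm.one_apply]
    linarith [dist_triangle (f (x (a - 1))) (x a) p, mem_ball'.1 hp]
  refine ⟨glue b (glue a x o) x, isPseudoOrbit_glue (fun i _ => hinner i) ?_
    (fun i hi => (hb₀ i (by omega)).trans (half_lt_self hδ)), ?_⟩
  · rw [glue_apply_of_ge _ _ (by omega : a ≤ b - 1)]
    show dist (f ((f ^ (b - 1)) ((f ^ (-a)) p))) (x b) < δ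
    rwa [← zpow_add_one_apply, sub_add_cancel, ← zpow_add_apply, ← sub_eq_add_neg]
  · filter_upwards [(Set.finite_Ico a b).eventually_cofinite_notMem] with i hi
    rcases lt_or_ge i a with hia | hia
    · simp [glue, hia, hia.trans_le (by omega : a ≤ b)]
    · simp [glue, (by simpa [hia] using hi : b ≤ i).not_gt]

lemma exists_eventually_dist_lt (hmix : TopologicallyMixing f) (hsh : ShadowingPropertyZ f)
    {x : ℤ → X} (hx : IsTwoSidedLimitPseudoOrbit f x) {ε : ℝ} (hε : 0 < ε) :
    ∃ y, ∀ᶠ i in cofinite, dist ((f ^ i) y) (x i) < ε := by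
  obtain ⟨δ, hδ, hshadow⟩ := hsh ε hε
  obtain ⟨z, hz, hzx⟩ := exists_isPseudoOrbit_eventuallyEq hmix hx hδ
  obtain ⟨y, hy⟩ := hshadow z hz
  exact ⟨y, hzx.mono fun i hi => hi ▸ hy i⟩

theorem _root_.Expansive.twoSidedLimitShadowing (he : Expansive f) (hf : Continuous f)
    (hf' : Continuous f.symm) (hmix : TopologicallyMixing f) (hsh : ShadowingPropertyZ f) :
    TwoSidedLimitShadowing f := by
  obtain ⟨c, hc, hexp⟩ := he
  intro x hx
  obtain ⟨y, hy⟩ := exists_eventually_dist_lt hmix hsh hx (half_pos hc)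
  refine ⟨y, tendsto_order.2 ⟨fun a ha => .of_forall fun i => ha.trans_le dist_nonneg,
    fun ε hε => ?_⟩⟩
  obtain ⟨w, hw⟩ := exists_eventually_dist_lt hmix hsh hx (lt_min (half_pos hε) (half_pos hc))
  have hyw := tendsto_dist_zpow_of_eventually_le hf hf' hexp (y := y) (w := w) <| by
    filter_upwards [hy, hw] with i hyi hwi
    linarith [dist_triangle_right ((f ^ i) y) ((f ^ i) w) (x i), min_le_right (ε / 2) (c / 2)]
  filter_upwards [hyw.eventually (gt_mem_nhds (half_pos hε)), hw] with i h₁ h₂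
  linarith [dist_triangle ((f ^ i) y) ((f ^ i) w) (x i), min_le_left (ε / 2) (c / 2)]

/-- `w` jumps to a point of the backward orbit of `v` close to `f w`, and by uniform continuity
`f w` jumps to its image; both chains then follow the orbit of `v`. -/
lemma exists_hasChain_of_mapClusterPt_atBot (hf : Continuous f) {v w : X}
    (hw : MapClusterPt w atBot (fun i : ℤ => (f ^ i) v)) {δ : ℝ} (hδ : 0 < δ) :
    ∃ m, HasChain f δ (m + 1) w v ∧ HasChain f δ m (f w) v := by
  obtain ⟨δ₁, hδ₁, hmod⟩ :=
    Metric.uniformContinuous_iff.1 (CompactSpace.uniformContinuous_of_continuous hf) δ hδ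
  obtain ⟨i, hi, hiw⟩ := frequently_atBot.1 ((hw.continuousAt_comp hf.continuousAt).frequently
    (ball_mem_nhds (f w) (lt_min hδ hδ₁))) (-2)
  have hiw : dist ((f ^ (i + 1)) v) (f w) < min δ δ₁ := by
    rw [zpow_add_one_apply]; exact hiw
  refine ⟨(-i - 1).toNat, hasChain_of_dist_lt_zpow (by omega) ?_,
    hasChain_of_dist_lt_zpow (by omega) ?_⟩
  · rw [show 1 - (((-i - 1).toNat + 1 : ℕ) : ℤ) = i + 1 by omega, dist_comm]
    exact hiw.trans_le (min_le_left _ _)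
  · rw [show 1 - (((-i - 1).toNat : ℕ) : ℤ) = i + 1 + 1 by omega, zpow_add_one_apply, dist_comm]
    exact hmod (hiw.trans_le (min_le_right _ _))

/-- The chains run from `u` to an `ω`-limit point `w`, then along a point asymptotic to the
backward orbit of `w` and to the forward orbit of an `α`-limit point `v'` of `v`, and finally from
`v'` to `v`; entering the orbit of `v'` one step earlier or later changes the length by one. -/
lemma _root_.TwoSidedLimitShadowing.exists_hasChain_and_hasChain_succ
    (hT : TwoSidedLimitShadowing f) (hf : Continuous f) (hf' : Continuous f.symm) {δ : ℝ}
    (hδ : 0 < δ) (u v : X) : ∃ T, HasChain f δ T u v ∧ HasChain f δ (T + 1) u v := by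
  obtain ⟨w, -, hw⟩ :=
    isCompact_univ.exists_mapClusterPt (f := atTop) (u := fun i : ℤ => (f ^ i) u) (by simp)
  obtain ⟨v', -, hv'⟩ :=
    isCompact_univ.exists_mapClusterPt (f := atBot) (u := fun i : ℤ => (f ^ i) v) (by simp)
  obtain ⟨K, hK₀, hK₁⟩ := ((hT.eventually_hasChain_zpow hδ w v').and
    (hT.eventually_hasChain_zpow hδ w ((f ^ (-1 : ℤ)) v'))).exists
  obtain ⟨n, hn⟩ := exists_hasChain_of_mapClusterPt_atTop
    (mapClusterPt_zpow hf hf' (tendsto_atTop_add_const_left _ _ tendsto_id) hw) hδ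
  obtain ⟨m, hm₁, hm⟩ := exists_hasChain_of_mapClusterPt_atBot hf
    (mapClusterPt_zpow hf hf' (tendsto_atBot_add_const_left _ (K : ℤ) tendsto_id) hv') hδ
  rw [← zpow_add_one_apply] at hm
  rw [← zpow_add_apply, show (K : ℤ) + 1 + -1 = K by ring] at hK₁
  exact ⟨n + (1 + 2 * K) + m, (hn.trans hK₀).trans hm, (hn.trans hK₁).trans hm₁⟩

lemma _root_.TwoSidedLimitShadowing.exists_forall_ge_hasChain (hT : TwoSidedLimitShadowing f)
    (hf : Continuous f) (hf' : Continuous f.symm) {δ : ℝ} (hδ : 0 < δ) (u v : X) :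
    ∃ N, ∀ n ≥ N, HasChain f δ n u v := by
  obtain ⟨T, huv, -⟩ := hT.exists_hasChain_and_hasChain_succ hf hf' hδ u v
  obtain ⟨a, ha, ha'⟩ := hT.exists_hasChain_and_hasChain_succ hf hf' hδ v v
  let loops : AddSubmonoid ℕ :=
    { carrier := {n | HasChain f δ n v v}
      add_mem' := HasChain.trans
      zero_mem' := hasChain_zero hδ v }
  obtain ⟨N, hN⟩ := Nat.exists_mem_closure_of_ge ({a, a + 1} : Set ℕ)
  have hgcd : Nat.setGcd {a, a + 1} ∣ 1 :=
    (Nat.dvd_add_right (Nat.setGcd_dvd_of_mem (Set.mem_insert a _))).1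
      (Nat.setGcd_dvd_of_mem (Set.mem_insert_of_mem a rfl))
  refine ⟨T + N, fun n hn => ?_⟩
  have hloop : n - T ∈ loops := AddSubmonoid.closure_le.2
    (by simp [Set.insert_subset_iff, loops, ha, ha']) (hN _ (by omega) (hgcd.trans (one_dvd _)))
  simpa [Nat.add_sub_cancel' (by omega : T ≤ n)] using huv.trans hloop

theorem _root_.TwoSidedLimitShadowing.topologicallyMixing (hT : TwoSidedLimitShadowing f)
    (hf : Continuous f) (hf' : Continuous f.symm) (hsh : ShadowingPropertyZ f) :
    TopologicallyMixing f := by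
  rintro U V hU hV ⟨u, hu⟩ ⟨v, hv⟩
  obtain ⟨ε₁, hε₁, hεU⟩ := Metric.isOpen_iff.1 hU u hu
  obtain ⟨ε₂, hε₂, hεV⟩ := Metric.isOpen_iff.1 hV v hv
  obtain ⟨δ, hδ, hshadow⟩ := hsh (min ε₁ ε₂) (lt_min hε₁ hε₂)
  obtain ⟨N, hN⟩ := hT.exists_forall_ge_hasChain hf hf' hδ u v
  refine ⟨N, fun n hn => ?_⟩
  obtain ⟨c, hc, hc0, hcn⟩ := hN n hn
  obtain ⟨y, hy⟩ := hshadow c hc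
  refine ⟨f^[n] y, ⟨y, hεU ?_, rfl⟩, hεV ?_⟩
  · simpa [hc0] using (hy 0).trans_le (min_le_left _ _)
  · simpa [hcn, ← Perm.coe_pow] using (hy n).trans_le (min_le_right _ _)

lemma _root_.TwoSidedLimitShadowing.exists_loop_of_not_shadowed (hT : TwoSidedLimitShadowing f)
    (hf : Continuous f) (hf' : Continuous f.symm) {δ ε : ℝ} (hδ : 0 < δ) {x : ℤ → X}
    (hx : IsPseudoOrbit f δ x) (hbad : ∀ y, ∃ i, ε < dist ((f ^ i) y) (x i)) (p : X) :
    ∃ n : ℕ, ∃ B : ℤ → X, 0 < n ∧ IsPseudoOrbit f δ B ∧ B 0 = p ∧ B n = p ∧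
      ∀ z, ∃ i : ℤ, 0 ≤ i ∧ i ≤ n ∧ ε < dist ((f ^ i) z) (B i) := by
  obtain ⟨u, hu⟩ := exists_finset_of_not_shadowed hf hf' hbad
  set m : ℕ := u.sup Int.natAbs + 1
  have hum (i : ℤ) (hi : i ∈ u) : -(m : ℤ) < i ∧ i < m := by
    have := Finset.le_sup (f := Int.natAbs) hi
    omega
  obtain ⟨A, hA⟩ := hT.exists_forall_ge_hasChain hf hf' hδ p (x (-m))
  obtain ⟨C, hC⟩ := hT.exists_forall_ge_hasChain hf hf' hδ (x m) p
  obtain ⟨c₁, hc₁, hc₁0, hc₁A⟩ := hA A le_rfl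
  obtain ⟨c₂, hc₂, hc₂0, hc₂C⟩ := hC (C + 1) (by omega)
  set a : ℤ := A + m
  set B : ℤ → X := glue A c₁ (glue (a + m) (fun i => x (i - a)) (fun i => c₂ (i - (a + m))))
    with hB
  have h₂ : x (a + m - a) = c₂ (a + m - (a + m)) := by simp [hc₂0]
  have h₁ : c₁ A = glue (a + m) (fun i => x (i - a)) (fun i => c₂ (i - (a + m))) A := by
    rw [glue_apply_of_le h₂ (by omega), hc₁A]
    congr 1
    omega
  refine ⟨A + 2 * m + (C + 1), B, by omega, hc₁.glue ((hx.comp_sub a).glue (hc₂.comp_sub _) h₂) h₁,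
    by rw [hB, glue_apply_of_le h₁ (by omega), hc₁0], ?_, fun z => ?_⟩
  · rw [hB, glue_apply_of_ge _ _ (by omega), glue_apply_of_ge _ _ (by omega), ← hc₂C]
    congr 1
    push_cast
    ring
  · obtain ⟨i, hi, hiz⟩ := hu ((f ^ a) z)
    have := hum i hi
    have hxi : B (i + a) = x i := by
      rw [hB, glue_apply_of_ge _ _ (by omega), glue_apply_of_le h₂ (by omega), add_sub_cancel_right]
    refine ⟨i + a, by omega, by omega, ?_⟩
    rwa [hxi, zpow_add_apply]

theorem _root_.TwoSidedLimitShadowing.shadowingPropertyZ (hT : TwoSidedLimitShadowing f)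
    (hf : Continuous f) (hf' : Continuous f.symm) : ShadowingPropertyZ f := by
  by_contra hsh
  simp only [ShadowingPropertyZ, not_forall, not_exists, not_and, not_lt] at hsh
  obtain ⟨ε, hε, hbad⟩ := hsh
  obtain ⟨x₀, -⟩ := hbad 1 one_pos
  have hloop (k : ℕ) : ∃ n : ℕ, ∃ B : ℤ → X, 0 < n ∧ IsPseudoOrbit f (1 / (k + 1)) B ∧
      B 0 = x₀ 0 ∧ B n = x₀ 0 ∧ ∀ z, ∃ i : ℤ, 0 ≤ i ∧ i ≤ n ∧ ε / 2 < dist ((f ^ i) z) (B i) := by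
    obtain ⟨x, hx, hxbad⟩ := hbad (1 / (k + 1)) (by positivity)
    exact hT.exists_loop_of_not_shadowed hf hf' (by positivity) hx
      (fun y => (hxbad y).imp fun i hi => (half_lt_self hε).trans_le hi) (x₀ 0)
  choose n B hn hB hB0 hBn hBbad using hloop
  obtain ⟨x, t, hx, ht, hxB⟩ := exists_isTwoSidedLimitPseudoOrbit_concat
    tendsto_one_div_add_atTop_nhds_zero_nat hn hB hB0 hBn
  obtain ⟨y, hy⟩ := hT x hx
  obtain ⟨M, hM⟩ := eventually_atTop.1 ((hy.mono_left (Int.cofinite_eq ▸ le_sup_right)).eventually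
    (gt_mem_nhds (half_pos hε)))
  obtain ⟨k, hk⟩ := (ht.eventually_ge_atTop M.toNat).exists
  obtain ⟨i, hi0, hin, hi⟩ := hBbad k ((f ^ (t k : ℤ)) y)
  have := hM (t k + i) (by omega)
  rw [hxB k i hi0 hin, add_comm, zpow_add_apply] at this
  linarith

end Compact

end LimitShadowing

/-- An expansive homeomorphism of a compact metric space is topologically mixing with
the shadowing property if and only if it has the two-sided limit shadowing property. -/
theorem stmt14 [CompactSpace X] (f : X ≃ₜ X) (he : Expansive f.toEquiv) :
    (TopologicallyMixing ⇑f ∧ ShadowingPropertyZ f.toEquiv) ↔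
      TwoSidedLimitShadowing f.toEquiv :=
  ⟨fun ⟨hmix, hsh⟩ => he.twoSidedLimitShadowing f.continuous f.symm.continuous hmix hsh,
    fun hT => ⟨hT.topologicallyMixing f.continuous f.symm.continuous
      (hT.shadowingPropertyZ f.continuous f.symm.continuous),
      hT.shadowingPropertyZ f.continuous f.symm.continuous⟩⟩
end

section
/- Let (X,d) be a compact metric space with d ≤ 1, equip X^ℤ with the metric D(x,y) = sup_{j∈ℤ} d(x_j, y_j)/2^{|j|}, and let σ : X^ℤ → X^ℤ be the shift map σ((x_n)_{n∈ℤ}) = (x_{n+1})_{n∈ℤ}. Then σ is a homeomorphism of the compact metric space (X^ℤ, D) and has the two-sided limit shadowing property. -/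
open Filter Topology

/-!
The shadowing point is `y n = x n 0`, so that coordinate `j` of `σ^i y` is `x (i + j) 0`. This
point is joined to `x i j` by a chain of `|j|` pseudo-orbit steps, each comparing two coordinates of
index at most `|j|` and hence costing at most `2^|j|` times the corresponding error
`D(σ x^(m), x^(m+1))`. Coordinates of index beyond any `N` contribute at most `2^-N` to `D` since
`d ≤ 1`, and the errors near `i` are small for all but finitely many `i`.
-/

/-- The shift map on `X^ℤ`, as a bijection. -/
def shiftMap {X : Type*} : (ℤ → X) ≃ (ℤ → X) where
  toFun x n := x (n + 1)
  invFun x n := x (n - 1)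
  left_inv x := funext fun n => by simp
  right_inv x := funext fun n => by simp

/-- The metric `D(x,y) = sup_j d(x_j, y_j) / 2^{|j|}` on `X^ℤ`. -/
noncomputable def prodDist {X : Type*} [MetricSpace X] (x y : ℤ → X) : ℝ :=
  ⨆ j : ℤ, dist (x j) (y j) / (2 : ℝ) ^ |j|

lemma dist_le_mul_of_forall_dist_succ_le {α : Type*} [PseudoMetricSpace α] (f : ℕ → α)
    (n : ℕ) {c : ℝ} (h : ∀ t < n, dist (f t) (f (t + 1)) ≤ c) :
    dist (f 0) (f n) ≤ n * c :=
  calc dist (f 0) (f n) ≤ ∑ t ∈ Finset.range n, dist (f t) (f (t + 1)) :=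
        dist_le_range_sum_dist f n
    _ ≤ n * c := by
        simpa using Finset.sum_le_card_nsmul _ _ c fun t ht => h t (Finset.mem_range.1 ht)

lemma isHomeomorph_shiftMap {X : Type*} [TopologicalSpace X] :
    IsHomeomorph (⇑(shiftMap (X := X))) :=
  (Homeomorph.mk shiftMap (continuous_pi fun n => continuous_apply (n + 1))
    (continuous_pi fun n => continuous_apply (n - 1))).isHomeomorph

lemma shiftMap_zpow_apply {X : Type*} (i : ℤ) (y : ℤ → X) (j : ℤ) :
    (shiftMap ^ i) y j = y (j + i) := by
  induction i using Int.induction_on generalizing y j with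
  | zero => simp
  | succ n ih =>
    rw [zpow_add_one, Equiv.Perm.mul_apply, ih]
    exact congrArg y (by ring)
  | pred n ih =>
    rw [zpow_sub_one, Equiv.Perm.mul_apply, ih]
    exact congrArg y (by ring)

lemma eventually_cofinite_forall_abs_sub_le {p : ℤ → Prop} (hp : ∀ᶠ m in cofinite, p m)
    (N : ℕ) : ∀ᶠ i : ℤ in cofinite, ∀ m : ℤ, |m - i| ≤ N → p m := by
  have : ∀ᶠ i in cofinite, ∀ k ∈ Finset.Icc (-(N : ℤ)) N, p (i + k) :=
    (eventually_all_finset _).2 fun k _ => (add_left_injective k).tendsto_cofinite.eventually hp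
  filter_upwards [this] with i hi m hm
  simpa using hi (m - i) (Finset.mem_Icc.2 (abs_le.1 hm))

section prodDist

variable {X : Type*} [MetricSpace X]

lemma bddAbove_prodDist (hd : ∀ x y : X, dist x y ≤ 1) (u v : ℤ → X) :
    BddAbove (Set.range fun j : ℤ => dist (u j) (v j) / (2 : ℝ) ^ |j|) := by
  refine ⟨1, ?_⟩
  rintro _ ⟨j, rfl⟩
  exact (div_le_self dist_nonneg (one_le_zpow₀ one_le_two (abs_nonneg j))).trans (hd _ _)

lemma prodDist_nonneg (hd : ∀ x y : X, dist x y ≤ 1) (u v : ℤ → X) : 0 ≤ prodDist u v :=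
  (by positivity : (0 : ℝ) ≤ dist (u 0) (v 0) / 2 ^ |(0 : ℤ)|).trans
    (le_ciSup (bddAbove_prodDist hd u v) 0)

lemma dist_apply_le_prodDist (hd : ∀ x y : X, dist x y ≤ 1) (u v : ℤ → X) (j : ℤ) :
    dist (u j) (v j) ≤ 2 ^ |j| * prodDist u v := by
  rw [← div_le_iff₀' (by positivity)]
  exact le_ciSup (bddAbove_prodDist hd u v) j

lemma prodDist_le_max (hd : ∀ x y : X, dist x y ≤ 1) (u v : ℤ → X) (N : ℕ) {r : ℝ}
    (h : ∀ j : ℤ, |j| ≤ N → dist (u j) (v j) ≤ r) :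
    prodDist u v ≤ max r ((1 / 2) ^ N) := by
  refine ciSup_le fun j => ?_
  rcases le_or_gt |j| N with hj | hj
  · exact (div_le_self dist_nonneg (one_le_zpow₀ one_le_two (abs_nonneg j))).trans
      ((h j hj).trans (le_max_left _ _))
  · refine le_max_of_le_right ?_
    calc dist (u j) (v j) / 2 ^ |j| ≤ 1 / 2 ^ |j| := by gcongr; exact hd _ _
      _ ≤ 1 / 2 ^ (N : ℤ) := by gcongr; exact one_le_two
      _ = (1 / 2) ^ N := by rw [zpow_natCast, one_div_pow]

lemma dist_apply_succ_le (hd : ∀ x y : X, dist x y ≤ 1) (x : ℤ → ℤ → X) (m k : ℤ) {N : ℕ}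
    (hk : |k| ≤ N) {η : ℝ} (hm : prodDist (shiftMap (x m)) (x (m + 1)) ≤ η) :
    dist (x m (k + 1)) (x (m + 1) k) ≤ 2 ^ N * η :=
  calc dist (x m (k + 1)) (x (m + 1) k) ≤ 2 ^ |k| * prodDist (shiftMap (x m)) (x (m + 1)) :=
        dist_apply_le_prodDist hd (shiftMap (x m)) (x (m + 1)) k
    _ ≤ 2 ^ (N : ℤ) * η := by
        gcongr
        exacts [prodDist_nonneg hd _ _, one_le_two]
    _ = 2 ^ N * η := by rw [zpow_natCast]

lemma dist_apply_le_of_pseudoOrbit (hd : ∀ x y : X, dist x y ≤ 1) (x : ℤ → ℤ → X) (i : ℤ)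
    (N : ℕ) {η : ℝ} (hη : ∀ m, |m - i| ≤ N → prodDist (shiftMap (x m)) (x (m + 1)) ≤ η)
    (j : ℤ) (hj : |j| ≤ N) :
    dist (x i j) (x (i + j) 0) ≤ N * 2 ^ N * η := by
  rw [mul_assoc]
  have hη₀ : 0 ≤ 2 ^ N * η :=
    mul_nonneg (by positivity) ((prodDist_nonneg hd _ _).trans (hη i (by simp)))
  obtain ⟨n, rfl | rfl⟩ := Int.eq_nat_or_neg j
  all_goals
    have hn : n ≤ N := by simp only [abs_neg, Nat.abs_cast] at hj; exact_mod_cast hj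
    refine le_trans ?_ (mul_le_mul_of_nonneg_right (Nat.cast_le.2 hn) hη₀)
  · have := dist_le_mul_of_forall_dist_succ_le (fun t => x (i + t) (n - t)) n
      (c := 2 ^ N * η) fun t ht => by
        have := dist_apply_succ_le hd x (i + t) (n - t - 1) (N := N)
          (abs_le.2 ⟨by omega, by omega⟩) (hη _ (abs_le.2 ⟨by omega, by omega⟩))
        convert this using 3 <;> push_cast <;> ring
    simpa using this
  · have := dist_le_mul_of_forall_dist_succ_le (fun t => x (i - t) (t - n)) n
      (c := 2 ^ N * η) fun t ht => by
        have := dist_apply_succ_le hd x (i - t - 1) (t - n) (N := N)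
          (abs_le.2 ⟨by omega, by omega⟩) (hη _ (abs_le.2 ⟨by omega, by omega⟩))
        rw [dist_comm]
        convert this using 3 <;> push_cast <;> ring
    simpa [sub_eq_add_neg] using this

lemma tendsto_prodDist_shiftMap_zpow_of_pseudoOrbit (hd : ∀ x y : X, dist x y ≤ 1) (x : ℤ → ℤ → X)
    (hx : Tendsto (fun i : ℤ => prodDist (shiftMap (x i)) (x (i + 1))) cofinite (𝓝 0)) :
    Tendsto (fun i : ℤ => prodDist ((shiftMap ^ i) fun n => x n 0) (x i)) cofinite (𝓝 0) := by
  refine Metric.tendsto_nhds.2 fun δ hδ => ?_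
  obtain ⟨N, hN⟩ := exists_pow_lt_of_lt_one hδ one_half_lt_one
  obtain ⟨η, hη, hηδ⟩ := exists_pos_mul_lt hδ (N * 2 ^ N)
  have hev := eventually_cofinite_forall_abs_sub_le
    ((hx.eventually (gt_mem_nhds hη)).mono fun _ => le_of_lt) N
  filter_upwards [hev] with i hi
  rw [Real.dist_0_eq_abs, abs_of_nonneg (prodDist_nonneg hd _ _)]
  refine (prodDist_le_max hd _ _ N (r := N * 2 ^ N * η) fun j hj => ?_).trans_lt
    (max_lt hηδ hN)
  rw [shiftMap_zpow_apply, dist_comm, add_comm]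
  exact dist_apply_le_of_pseudoOrbit hd x i N hi j hj

end prodDist

theorem stmt18_general {X : Type*} [MetricSpace X]
    (hd : ∀ x y : X, dist x y ≤ 1) :
    IsHomeomorph (⇑(shiftMap (X := X))) ∧
    (∀ x : ℤ → (ℤ → X),
      Tendsto (fun i : ℤ => prodDist (shiftMap (x i)) (x (i + 1))) cofinite (𝓝 0) →
      ∃ y : ℤ → X,
        Tendsto (fun i : ℤ => prodDist ((shiftMap ^ i) y) (x i)) cofinite (𝓝 0)) :=
  ⟨isHomeomorph_shiftMap, fun x hx => ⟨_, tendsto_prodDist_shiftMap_zpow_of_pseudoOrbit hd x hx⟩⟩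

/-- For a compact metric space `X` with `d ≤ 1`, the shift map on `X^ℤ` (with the
metric `D`, which induces the product topology) is a homeomorphism and has the
two-sided limit shadowing property. -/
theorem stmt18 {X : Type*} [MetricSpace X] [CompactSpace X]
    (hd : ∀ x y : X, dist x y ≤ 1) :
    IsHomeomorph (⇑(shiftMap (X := X))) ∧
    (∀ x : ℤ → (ℤ → X),
      Tendsto (fun i : ℤ => prodDist (shiftMap (x i)) (x (i + 1))) cofinite (𝓝 0) →
      ∃ y : ℤ → X,
        Tendsto (fun i : ℤ => prodDist ((shiftMap ^ i) y) (x i)) cofinite (𝓝 0)) :=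
  stmt18_general hd
end
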